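/- arXiv:math/0505259 — 5 statements merged into one kernel-verified Lean document; each statement's English description precedes it below -/
import Mathlib

section
/- Depoissonization lemma: let (a_n)_{n≥0} be real numbers such that the power series ∑_{j=0}^∞ a_j z^j/j! defines an entire function, and set P(z) = e^{−z} ∑_{j=0}^∞ a_j z^j/j!. Fix θ ∈ (0, π/2) and let S_θ = {z ∈ ℂ : |arg z| ≤ θ}. Suppose there exist constants α ∈ (0,1), β₁ > 0, β₂ > 0, c > 0 and z₀ > 0 such that (i) |P(z)| ≤ β₁|z|^c for all z ∈ S_θ with |z| ≥ z₀, and (ii) |P(z)e^z| ≤ β₂|z|^c e^{α|z|} for all z ∉ S_θ with |z| ≥ z₀. Then a_n = P(n) + O(n^{c−1/2} ln n): there exist C > 0 and n₀ such that |a_n − P(n)| ≤ C·n^{c−1/2}·ln n for all n ≥ n₀. -/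
/-!
Cauchy's formula on the circle `|z| = n`, applied to the entire function `F(z) - P(n) e^z`
whose `n`-th exponential coefficient is `a_n - P(n)`, writes `(2π n^n / n!) (a_n - P(n))` as the
integral over `t ∈ [-π, π]` of `(F(n e^{it}) - P(n) e^{n e^{it}}) e^{-int}`.

Near `t = 0` the point `n e^{it}` lies in a disc around `n` of radius proportional to `n` inside
the cone, where `P = O(n^c)`; by the Schwarz lemma `P` is `O(n^{c-1})`-Lipschitz there, so for
`|t| ≤ δ` the integrand is `O(n^c δ e^n)`. For `δ ≤ |t| ≤ π` the bound `cos t ≤ 1 - 2t²/π²` and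
the two growth conditions bound it by `O(n^c e^{n(1 - 2δ²/π²)} + n^c e^{αn})`. With
`δ² = π² ln n / (2n)` and Stirling's bound `n! ≤ e √n (n/e)^n`, every contribution is
`O(n^{c-1/2} ln n)`.
-/

open MeasureTheory Filter Complex Set Metric
open scoped Real Topology Nat

theorem integral_exp_int_mul_mul_I (k : ℤ) :
    ∫ t in (-π)..π, exp (k * t * I) = if k = 0 then 2 * (π : ℂ) else 0 := by
  split_ifs with hk
  · simp only [hk, Int.cast_zero, zero_mul, Complex.exp_zero, intervalIntegral.integral_const,
      sub_neg_eq_add, real_smul, mul_one]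
    push_cast; ring
  · have hkI : (k : ℂ) * I ≠ 0 := mul_ne_zero (by exact_mod_cast hk) I_ne_zero
    have hperiodic : exp (k * I * π) = exp (k * I * (-π : ℝ)) := by
      rw [← mul_one (exp (k * I * (-π : ℝ))), ← exp_int_mul_two_pi_mul_I k, ← Complex.exp_add]
      push_cast; ring_nf
    simp_rw [mul_right_comm _ _ I]
    rw [integral_exp_mul_complex hkI, hperiodic, sub_self, zero_div]

theorem integral_circleMap_mul_exp_neg_eq_coeff (b : ℕ → ℂ) (G : ℂ → ℂ)
    (hG : ∀ z, HasSum (fun j => b j * z ^ j / j !) (G z)) (R : ℝ) (n : ℕ) :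
    ∫ t in (-π)..π, G (circleMap 0 R t) * exp (-(n * t * I)) = 2 * π * (b n * R ^ n / n !) := by
  have hterm : ∀ (j : ℕ) (t : ℝ), b j * circleMap 0 R t ^ j / j ! * exp (-(n * t * I)) =
      b j * R ^ j / j ! * exp (((j - n : ℤ) : ℂ) * t * I) := by
    intro j t
    rw [circleMap_zero_pow, circleMap_zero]
    push_cast
    rw [show ((j : ℂ) - n) * t * I = j * t * I + -(n * t * I) by ring, Complex.exp_add]
    ring
  have hsum := intervalIntegral.hasSum_integral_of_dominated_convergence
    (μ := volume) (a := -π) (b := π)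
    (F := fun j t => b j * circleMap 0 R t ^ j / j ! * exp (-(n * t * I)))
    (f := fun t => G (circleMap 0 R t) * exp (-(n * t * I)))
    (fun j _ => ‖b j‖ * |R| ^ j / j !)
    (fun j => by fun_prop) (fun j => ae_of_all _ fun t _ => by
      simp [hterm, Complex.norm_exp])
    (ae_of_all _ fun t _ => by
      simpa using summable_norm_iff.mpr (hG (|R| : ℝ)).summable)
    intervalIntegrable_const
    (ae_of_all _ fun t _ => (hG _).mul_right _)
  refine hsum.unique ?_
  simp_rw [hterm, intervalIntegral.integral_const_mul, integral_exp_int_mul_mul_I, sub_eq_zero,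
    Nat.cast_inj, mul_ite, mul_zero]
  have hsingle := hasSum_single (f := fun j => if j = n then b j * R ^ j / j ! * (2 * π) else 0) n
    fun j hj => if_neg hj
  rwa [if_pos rfl, mul_comm (b n * _ / _)] at hsingle

theorem integral_circleMap_sub_mul_exp (a : ℕ → ℂ) (F : ℂ → ℂ)
    (hFsum : ∀ z, HasSum (fun j => a j * z ^ j / j !) (F z)) (p : ℂ) (R : ℝ) (n : ℕ) :
    ∫ t in (-π)..π, (F (circleMap 0 R t) - p * exp (circleMap 0 R t)) * exp (-(n * t * I)) =
      2 * π * ((a n - p) * R ^ n / n !) := by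
  refine integral_circleMap_mul_exp_neg_eq_coeff (fun j => a j - p) (fun z => F z - p * exp z)
    (fun z => ?_) R n
  have hexp : HasSum (fun j => z ^ j / j !) (exp z) := by
    simpa [Complex.exp_eq_exp_ℂ] using NormedSpace.expSeries_div_hasSum_exp z
  simpa only [sub_mul, sub_div, mul_div_assoc] using (hFsum z).sub (hexp.mul_left p)

theorem factorial_div_pow_le_exp_one_mul_sqrt_mul_exp_neg {n : ℕ} (hn : n ≠ 0) :
    (n ! / n ^ n : ℝ) ≤ Real.exp 1 * √n * Real.exp (-n) := by
  have hseq : Stirling.stirlingSeq n ≤ Real.exp 1 / √2 := by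
    obtain ⟨m, rfl⟩ := Nat.exists_eq_add_one_of_ne_zero hn
    simpa [Stirling.stirlingSeq_one] using Stirling.stirlingSeq'_antitone (Nat.zero_le m)
  have hpos : 0 < √(2 * n) * (n / Real.exp 1) ^ n := by positivity
  rw [Stirling.stirlingSeq, div_le_iff₀ hpos] at hseq
  rw [div_le_iff₀ (by positivity)]
  calc (n ! : ℝ) ≤ Real.exp 1 / √2 * (√(2 * n) * (n / Real.exp 1) ^ n) := hseq
    _ = Real.exp 1 * √n * Real.exp (-n) * n ^ n := by
      rw [Real.sqrt_mul zero_le_two, div_pow, ← Real.exp_nat_mul, Real.exp_neg, mul_one]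
      field_simp

theorem mul_exp_neg_mul_le {b : ℝ} (hb : 0 < b) (x : ℝ) :
    x * Real.exp (-(b * x)) ≤ b⁻¹ * Real.exp (-1) := by
  rw [le_inv_mul_iff₀ hb, ← mul_assoc]
  exact Real.mul_exp_neg_le_exp_neg_one _

theorem norm_sub_le_of_differentiableOn_ball {f : ℂ → ℂ} {c z : ℂ} {ρ M : ℝ}
    (hf : DifferentiableOn ℂ f (ball c ρ)) (hM : ∀ w ∈ ball c ρ, ‖f w‖ ≤ M)
    (hz : z ∈ ball c ρ) : ‖f z - f c‖ ≤ 2 * M / ρ * ‖z - c‖ := by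
  have hc : c ∈ ball c ρ := mem_ball_self (pos_of_mem_ball hz)
  have hmaps : MapsTo f (ball c ρ) (closedBall (f c) (2 * M)) := fun w hw => by
    rw [mem_closedBall, dist_eq_norm]
    linarith [norm_sub_le (f w) (f c), hM w hw, hM c hc]
  simpa only [dist_eq_norm] using Complex.dist_le_div_mul_dist_of_mapsTo_ball hf hmaps hz

theorem abs_arg_le_of_norm_sub_le {θ x : ℝ} (hθ₀ : 0 ≤ θ) (hθ : θ < π / 2) (hx : 0 < x)
    {w : ℂ} (hw : ‖w - x‖ ≤ x * Real.sin θ) : |arg w| ≤ θ := by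
  have hsin_lt : Real.sin θ < 1 := by
    simpa using Real.sin_lt_sin_of_lt_of_le_pi_div_two (by linarith [Real.pi_pos]) le_rfl hθ
  have hre : 0 < w.re := by
    have := (abs_le.mp ((abs_re_le_norm (w - x)).trans hw)).1
    simp only [sub_re, ofReal_re] at this
    nlinarith
  have hw0 : 0 < ‖w‖ := norm_pos_iff.mpr fun h => by simp [h] at hre
  -- `x |Im w| = |Im (conj w * (w - x))|`: the distance from `x` to the line `ℝ w` is `≤ ‖w - x‖`
  have him : x * |w.im| ≤ ‖w‖ * ‖w - x‖ := by
    have h := abs_im_le_norm ((starRingEnd ℂ) w * (w - x))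
    simp only [mul_im, conj_re, conj_im, sub_re, sub_im, ofReal_re, ofReal_im, norm_mul,
      norm_conj] at h
    calc x * |w.im| = |w.re * w.im + -w.im * (w.re - x)| := by
          rw [show w.re * w.im + -w.im * (w.re - x) = x * w.im by ring, abs_mul, abs_of_pos hx]
      _ ≤ ‖w‖ * ‖w - x‖ := by simpa using h
  have habs_arg : |arg w| ≤ π / 2 := abs_arg_le_pi_div_two_iff.mpr hre.le
  have hsin : Real.sin |arg w| ≤ Real.sin θ := by
    rw [← Real.abs_sin_eq_sin_abs_of_abs_le_pi (abs_arg_le_pi w), sin_arg, abs_div, abs_norm,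
      div_le_iff₀ hw0]
    nlinarith
  exact (Real.strictMonoOn_sin.le_iff_le ⟨by linarith [abs_nonneg (arg w)], habs_arg⟩
    ⟨by linarith [Real.pi_pos], hθ.le⟩).mp hsin

theorem integral_le_of_le_inside_of_le_outside {f : ℝ → ℝ} {a δ A B : ℝ}
    (hf : ∀ u v, IntervalIntegrable f volume u v) (hδ₀ : 0 ≤ δ) (hδa : δ ≤ a)
    (hA : ∀ t, |t| ≤ δ → f t ≤ A) (hB : ∀ t, δ ≤ |t| → |t| ≤ a → f t ≤ B) :
    ∫ t in (-a)..a, f t ≤ 2 * δ * A + 2 * (a - δ) * B := by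
  have bound : ∀ {u v C : ℝ}, u ≤ v → (∀ t ∈ Icc u v, f t ≤ C) →
      ∫ t in u..v, f t ≤ (v - u) * C := fun huv h => by
    simpa using intervalIntegral.integral_mono_on huv (hf _ _) intervalIntegrable_const h
  rw [← intervalIntegral.integral_add_adjacent_intervals (hf (-a) (-δ)) (hf (-δ) a),
    ← intervalIntegral.integral_add_adjacent_intervals (hf (-δ) δ) (hf δ a)]
  have hleft := bound (C := B) (neg_le_neg hδa) fun t ht => hB t
    (by rw [abs_of_nonpos (by linarith [ht.2])]; linarith [ht.2])
    (by rw [abs_of_nonpos (by linarith [ht.2])]; linarith [ht.1])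
  have hmid := bound (C := A) (by linarith) fun t ht => hA t (abs_le.mpr ht)
  have hright := bound (C := B) hδa fun t ht => hB t
    (by rw [abs_of_nonneg (by linarith [ht.1])]; exact ht.1)
    (by rw [abs_of_nonneg (by linarith [ht.1])]; exact ht.2)
  linarith

theorem eventually_sqrt_log_div_lt {κ ε : ℝ} (hκ : κ ≠ 0) (hε : 0 < ε) :
    ∀ᶠ n : ℕ in atTop, √(Real.log n / (κ * n)) < ε := by
  have h := (Real.tendsto_pow_log_div_mul_add_atTop κ 0 1 hκ).comp tendsto_natCast_atTop_atTop
  simp only [pow_one, add_zero] at h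
  have hsqrt := (Real.continuous_sqrt.tendsto 0).comp h
  rw [Real.sqrt_zero] at hsqrt
  exact hsqrt.eventually (gt_mem_nhds hε)

theorem factorial_div_pow_mul_le_of_log_eq {α β₁ β₂ c s δ : ℝ} {n : ℕ} (hn : 3 ≤ n) (hα : α < 1)
    (hβ₁ : 0 ≤ β₁) (hβ₂ : 0 ≤ β₂) (hs : 0 < s) (hδ : 2 / π ^ 2 * n * δ ^ 2 = Real.log n) :
    n ! / n ^ n *
      (2 * β₁ * n ^ c * Real.exp (n * (1 - 2 / π ^ 2 * δ ^ 2)) + β₂ * n ^ c * Real.exp (α * n)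
        + 4 * β₁ * (2 * n) ^ c * δ ^ 2 * Real.exp n / (π * s)) ≤
      (2 * Real.exp 1 * β₁ + β₂ / (1 - α) + 2 * π * Real.exp 1 * β₁ * 2 ^ c / s) *
        n ^ (c - 1 / 2) * Real.log n := by
  have hn₀ : (0 : ℝ) < n := by positivity
  have hlog : 1 ≤ Real.log n := by
    have : (3 : ℝ) ≤ n := by exact_mod_cast hn
    rw [Real.le_log_iff_exp_le hn₀]
    linarith [Real.exp_one_lt_d9]
  have hexp₁ : Real.exp (n * (1 - 2 / π ^ 2 * δ ^ 2)) = Real.exp n / n := by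
    rw [show (n : ℝ) * (1 - 2 / π ^ 2 * δ ^ 2) = n - Real.log n by rw [← hδ]; ring, Real.exp_sub,
      Real.exp_log hn₀]
  have hexp₂ : Real.exp (-n) * Real.exp (α * n) = Real.exp (-((1 - α) * n)) := by
    rw [← Real.exp_add]; ring_nf
  have hδsq : δ ^ 2 = π ^ 2 * Real.log n / (2 * n) := by
    rw [← hδ]; field_simp
  set q := (n : ℝ) ^ (c - 1 / 2)
  have hsqrt : √n = n * q / n ^ c := by
    rw [eq_div_iff (by positivity), Real.sqrt_eq_rpow, ← Real.rpow_add hn₀,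
      show 1 / 2 + c = 1 + (c - 1 / 2) by ring, Real.rpow_add hn₀, Real.rpow_one]
  set L := Real.log n
  calc n ! / n ^ n * (2 * β₁ * n ^ c * Real.exp (n * (1 - 2 / π ^ 2 * δ ^ 2))
        + β₂ * n ^ c * Real.exp (α * n) + 4 * β₁ * (2 * n) ^ c * δ ^ 2 * Real.exp n / (π * s))
      ≤ Real.exp 1 * √n * Real.exp (-n) * (2 * β₁ * n ^ c * Real.exp (n * (1 - 2 / π ^ 2 * δ ^ 2))
        + β₂ * n ^ c * Real.exp (α * n) + 4 * β₁ * (2 * n) ^ c * δ ^ 2 * Real.exp n / (π * s)) := by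
        gcongr
        exact factorial_div_pow_le_exp_one_mul_sqrt_mul_exp_neg (by omega)
    _ = 2 * Real.exp 1 * β₁ * q + Real.exp 1 * β₂ * q * (n * Real.exp (-((1 - α) * n)))
        + 2 * π * Real.exp 1 * β₁ * 2 ^ c / s * q * L := by
        rw [hexp₁, hδsq, Real.mul_rpow zero_le_two hn₀.le, ← hexp₂, hsqrt, Real.exp_neg]
        field_simp
        ring
    _ ≤ _ := by
        have hq : 0 ≤ q := by positivity
        have hα' : 0 < 1 - α := by linarith
        have hterm₂ : Real.exp 1 * β₂ * q * (n * Real.exp (-((1 - α) * n))) ≤ β₂ / (1 - α) * q :=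
          calc _ ≤ Real.exp 1 * β₂ * q * ((1 - α)⁻¹ * Real.exp (-1)) :=
                mul_le_mul_of_nonneg_left (mul_exp_neg_mul_le hα' _) (by positivity)
            _ = β₂ / (1 - α) * q := by rw [Real.exp_neg]; field_simp
        have hcoef : 0 ≤ (2 * Real.exp 1 * β₁ + β₂ / (1 - α)) * q := by positivity
        nlinarith [mul_le_mul_of_nonneg_left hlog hcoef]

section

variable {F : ℂ → ℂ} {θ α β₁ β₂ c z₀ : ℝ}

theorem norm_exp_neg_mul_sub_le (hF : Differentiable ℂ F) (hθ₀ : 0 ≤ θ) (hθ : θ < π / 2)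
    (hβ₁ : 0 ≤ β₁) (hc : 0 ≤ c)
    (hin : ∀ z : ℂ, z₀ ≤ ‖z‖ → |z.arg| ≤ θ → ‖exp (-z) * F z‖ ≤ β₁ * ‖z‖ ^ c)
    {x : ℝ} (hx : 0 < x) (hxz₀ : 2 * z₀ ≤ x) {z : ℂ} (hz : z ∈ ball (x : ℂ) (x * Real.sin θ / 2)) :
    ‖exp (-z) * F z - exp (-x) * F x‖ ≤ 4 * β₁ * (2 * x) ^ c / (x * Real.sin θ) * ‖z - x‖ := by
  have hsin : Real.sin θ ≤ 1 := Real.sin_le_one θ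
  have hbound : ∀ w ∈ ball (x : ℂ) (x * Real.sin θ / 2), ‖exp (-w) * F w‖ ≤ β₁ * (2 * x) ^ c := by
    intro w hw
    rw [mem_ball, dist_eq_norm] at hw
    have hnorm := abs_norm_sub_norm_le w x
    rw [norm_real, Real.norm_of_nonneg hx.le] at hnorm
    obtain ⟨hlower, hupper⟩ := abs_le.mp hnorm
    have hsin₀ : 0 ≤ Real.sin θ := Real.sin_nonneg_of_nonneg_of_le_pi hθ₀ (by linarith)
    refine (hin w (by nlinarith) (abs_arg_le_of_norm_sub_le hθ₀ hθ hx (by nlinarith))).trans ?_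
    gcongr
    nlinarith
  have hdiff : Differentiable ℂ fun w => exp (-w) * F w := by fun_prop
  convert norm_sub_le_of_differentiableOn_ball hdiff.differentiableOn hbound hz using 2
  field_simp
  ring

theorem norm_sub_mul_exp_le_of_norm_eq (hθ₀ : 0 ≤ θ) (hβ₁ : 0 ≤ β₁) (hβ₂ : 0 ≤ β₂)
    (hin : ∀ z : ℂ, z₀ ≤ ‖z‖ → |z.arg| ≤ θ → ‖exp (-z) * F z‖ ≤ β₁ * ‖z‖ ^ c)
    (hout : ∀ z : ℂ, z₀ ≤ ‖z‖ → ¬ |z.arg| ≤ θ →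
      ‖exp (-z) * F z * exp z‖ ≤ β₂ * ‖z‖ ^ c * Real.exp (α * ‖z‖))
    {x : ℝ} (hx : 0 ≤ x) (hxz₀ : z₀ ≤ x) {z : ℂ} (hz : ‖z‖ = x) :
    ‖F z - exp (-x) * F x * exp z‖ ≤
      2 * β₁ * x ^ c * Real.exp z.re + β₂ * x ^ c * Real.exp (α * x) := by
  have hFz : F z = exp (-z) * F z * exp z := by
    rw [mul_right_comm, ← Complex.exp_add, neg_add_cancel, Complex.exp_zero, one_mul]
  have hPx : ‖exp (-x) * F x‖ ≤ β₁ * x ^ c := by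
    simpa [Real.norm_of_nonneg hx] using
      hin x (by simpa [Real.norm_of_nonneg hx]) (by simpa [arg_ofReal_of_nonneg hx])
  have hPx_exp : ‖exp (-x) * F x * exp z‖ ≤ β₁ * x ^ c * Real.exp z.re := by
    rw [norm_mul, Complex.norm_exp]
    gcongr
  have hFz_le : ‖F z‖ ≤ β₁ * x ^ c * Real.exp z.re + β₂ * x ^ c * Real.exp (α * x) := by
    by_cases harg : |z.arg| ≤ θ
    · have h := hin z (hz ▸ hxz₀) harg
      rw [hz] at h
      have : ‖F z‖ ≤ β₁ * x ^ c * Real.exp z.re := by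
        rw [hFz, norm_mul, Complex.norm_exp]
        gcongr
      have : 0 ≤ β₂ * x ^ c * Real.exp (α * x) := by positivity
      linarith
    · have h := hout z (hz ▸ hxz₀) harg
      rw [hz, ← hFz] at h
      have : 0 ≤ β₁ * x ^ c * Real.exp z.re := by positivity
      linarith
  calc ‖F z - exp (-x) * F x * exp z‖ ≤ ‖F z‖ + ‖exp (-x) * F x * exp z‖ := norm_sub_le _ _
    _ ≤ _ := by linarith

theorem norm_circleMap_sub_mul_exp_le_of_abs_le (hF : Differentiable ℂ F) (hθ₀ : 0 ≤ θ)
    (hθ : θ < π / 2) (hβ₁ : 0 ≤ β₁) (hc : 0 ≤ c)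
    (hin : ∀ z : ℂ, z₀ ≤ ‖z‖ → |z.arg| ≤ θ → ‖exp (-z) * F z‖ ≤ β₁ * ‖z‖ ^ c)
    {x : ℝ} (hx : 0 < x) (hxz₀ : 2 * z₀ ≤ x) {t δ : ℝ} (ht : |t| ≤ δ)
    (hδ : δ < Real.sin θ / 2) :
    ‖F (circleMap 0 x t) - exp (-x) * F x * exp (circleMap 0 x t)‖ ≤
      4 * β₁ * (2 * x) ^ c * δ * Real.exp x / Real.sin θ := by
  set z := circleMap 0 x t with hz_def
  have hsin : 0 < Real.sin θ := by linarith [abs_nonneg t]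
  have hdist : ‖z - x‖ ≤ x * δ := by
    have h := Real.norm_exp_I_mul_ofReal_sub_one_le (x := t)
    calc ‖z - x‖ = ‖(x : ℂ) * (exp (I * t) - 1)‖ := by
          rw [hz_def, circleMap_zero, mul_comm (t : ℂ) I, mul_sub, mul_one]
      _ = x * ‖exp (I * t) - 1‖ := by rw [norm_mul, norm_real, Real.norm_of_nonneg hx.le]
      _ ≤ x * δ := by gcongr; exact h.trans ht
  have hz : z ∈ ball (x : ℂ) (x * Real.sin θ / 2) := by
    rw [mem_ball, dist_eq_norm]; nlinarith
  have hsplit : F z - exp (-x) * F x * exp z = (exp (-z) * F z - exp (-x) * F x) * exp z := by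
    rw [sub_mul, mul_right_comm (exp (-z)), ← Complex.exp_add, neg_add_cancel, Complex.exp_zero,
      one_mul]
  have hexp : ‖exp z‖ ≤ Real.exp x := by
    rw [Complex.norm_exp, circleMap_zero_re]
    gcongr
    nlinarith [Real.cos_le_one t]
  rw [hsplit, norm_mul]
  calc ‖exp (-z) * F z - exp (-x) * F x‖ * ‖exp z‖
      ≤ (4 * β₁ * (2 * x) ^ c / (x * Real.sin θ) * (x * δ)) * Real.exp x := by
        have hδ₀ : 0 ≤ δ := (abs_nonneg t).trans ht
        refine mul_le_mul ?_ hexp (norm_nonneg _)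
          (mul_nonneg (div_nonneg (by positivity) (mul_pos hx hsin).le) (by positivity))
        exact (norm_exp_neg_mul_sub_le hF hθ₀ hθ hβ₁ hc hin hx hxz₀ hz).trans (by gcongr)
    _ = 4 * β₁ * (2 * x) ^ c * δ * Real.exp x / Real.sin θ := by
        field_simp

theorem norm_circleMap_sub_mul_exp_le_of_le_abs (hθ₀ : 0 ≤ θ) (hβ₁ : 0 ≤ β₁) (hβ₂ : 0 ≤ β₂)
    (hin : ∀ z : ℂ, z₀ ≤ ‖z‖ → |z.arg| ≤ θ → ‖exp (-z) * F z‖ ≤ β₁ * ‖z‖ ^ c)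
    (hout : ∀ z : ℂ, z₀ ≤ ‖z‖ → ¬ |z.arg| ≤ θ →
      ‖exp (-z) * F z * exp z‖ ≤ β₂ * ‖z‖ ^ c * Real.exp (α * ‖z‖))
    {x : ℝ} (hx : 0 ≤ x) (hxz₀ : z₀ ≤ x) {t δ : ℝ} (hδ₀ : 0 ≤ δ) (hδt : δ ≤ |t|) (ht : |t| ≤ π) :
    ‖F (circleMap 0 x t) - exp (-x) * F x * exp (circleMap 0 x t)‖ ≤
      2 * β₁ * x ^ c * Real.exp (x * (1 - 2 / π ^ 2 * δ ^ 2)) + β₂ * x ^ c * Real.exp (α * x) := by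
  refine (norm_sub_mul_exp_le_of_norm_eq hθ₀ hβ₁ hβ₂ hin hout hx hxz₀
    (by simp [abs_of_nonneg hx])).trans ?_
  rw [circleMap_zero_re]
  gcongr
  calc Real.cos t ≤ 1 - 2 / π ^ 2 * t ^ 2 := Real.cos_le_one_sub_mul_cos_sq ht
    _ ≤ 1 - 2 / π ^ 2 * δ ^ 2 := by
      have hsq : δ ^ 2 ≤ t ^ 2 := by rw [← sq_abs t]; gcongr
      exact sub_le_sub_left (mul_le_mul_of_nonneg_left hsq (by positivity)) 1

theorem norm_coeff_sub_le (a : ℕ → ℂ) (hF : Differentiable ℂ F)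
    (hFsum : ∀ z, HasSum (fun j => a j * z ^ j / j !) (F z))
    (hθ₀ : 0 ≤ θ) (hθ : θ < π / 2) (hβ₁ : 0 ≤ β₁) (hβ₂ : 0 ≤ β₂) (hc : 0 ≤ c)
    (hin : ∀ z : ℂ, z₀ ≤ ‖z‖ → |z.arg| ≤ θ → ‖exp (-z) * F z‖ ≤ β₁ * ‖z‖ ^ c)
    (hout : ∀ z : ℂ, z₀ ≤ ‖z‖ → ¬ |z.arg| ≤ θ →
      ‖exp (-z) * F z * exp z‖ ≤ β₂ * ‖z‖ ^ c * Real.exp (α * ‖z‖))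
    {n : ℕ} (hn : 0 < n) (hnz₀ : 2 * z₀ ≤ n) {δ : ℝ} (hδ₀ : 0 ≤ δ)
    (hδ : δ < Real.sin θ / 2) :
    ‖a n - exp (-n) * F n‖ ≤ n ! / n ^ n *
      (2 * β₁ * n ^ c * Real.exp (n * (1 - 2 / π ^ 2 * δ ^ 2)) + β₂ * n ^ c * Real.exp (α * n)
        + 4 * β₁ * (2 * n) ^ c * δ ^ 2 * Real.exp n / (π * Real.sin θ)) := by
  set x := (n : ℝ)
  have hx : 0 < x := Nat.cast_pos.mpr hn
  have hxz₀ : z₀ ≤ x := by linarith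
  have hsin : 0 < Real.sin θ := by linarith
  have hδπ : δ ≤ π := by linarith [Real.sin_le_one θ, Real.pi_gt_three]
  set g : ℝ → ℂ := fun t => F (circleMap 0 x t) - exp (-x) * F x * exp (circleMap 0 x t)
  set Bin := 4 * β₁ * (2 * x) ^ c * δ * Real.exp x / Real.sin θ
  set Bout :=
    2 * β₁ * x ^ c * Real.exp (x * (1 - 2 / π ^ 2 * δ ^ 2)) + β₂ * x ^ c * Real.exp (α * x)
  have hBout : 0 ≤ Bout := by positivity
  have hcont : Continuous g := by
    have := hF.continuous; fun_prop
  have hsplit : ∫ t in (-π)..π, ‖g t‖ ≤ 2 * δ * Bin + 2 * (π - δ) * Bout :=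
    integral_le_of_le_inside_of_le_outside (fun _ _ => hcont.norm.intervalIntegrable _ _) hδ₀ hδπ
      (fun t ht => norm_circleMap_sub_mul_exp_le_of_abs_le hF hθ₀ hθ hβ₁ hc hin hx
        (by linarith) ht hδ)
      (fun t hδt ht => norm_circleMap_sub_mul_exp_le_of_le_abs hθ₀ hβ₁ hβ₂ hin hout hx.le hxz₀ hδ₀
        hδt ht)
  have hcauchy : 2 * π * x ^ n / n ! * ‖a n - exp (-x) * F x‖ ≤ ∫ t in (-π)..π, ‖g t‖ := by
    have h := intervalIntegral.norm_integral_le_integral_norm (μ := volume)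
      (f := fun t => g t * exp (-(n * t * I))) (by linarith [Real.pi_pos] : -π ≤ π)
    have hkernel : ∀ t : ℝ, ‖g t * exp (-(n * t * I))‖ = ‖g t‖ := fun t => by
      rw [norm_mul, Complex.norm_exp]; simp
    rw [integral_circleMap_sub_mul_exp a F hFsum] at h
    simp_rw [hkernel] at h
    convert h using 1
    simp [abs_of_pos Real.pi_pos, abs_of_pos hx]
    ring
  rw [Complex.ofReal_natCast] at hcauchy
  have hr : 0 < 2 * π * x ^ n / n ! := by positivity
  calc ‖a n - exp (-n) * F n‖ ≤ (2 * δ * Bin + 2 * π * Bout) / (2 * π * x ^ n / n !) := by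
        rw [le_div_iff₀ hr, mul_comm]
        nlinarith
    _ = _ := by
        simp only [Bin, Bout]
        field_simp
        ring

end

theorem depoissonization_general (a : ℕ → ℝ) (F : ℂ → ℂ)
    (hF : Differentiable ℂ F)
    (hFsum : ∀ z : ℂ, HasSum (fun j : ℕ => (a j : ℂ) * z ^ j / (j.factorial : ℂ)) (F z))
    (θ : ℝ) (hθ₁ : 0 < θ) (hθ₂ : θ < Real.pi / 2)
    (α β₁ β₂ c z₀ : ℝ) (hα₂ : α < 1)
    (hβ₁ : 0 < β₁) (hβ₂ : 0 < β₂) (hc : 0 < c)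
    (hin : ∀ z : ℂ, z₀ ≤ ‖z‖ → |z.arg| ≤ θ →
      ‖Complex.exp (-z) * F z‖ ≤ β₁ * ‖z‖ ^ c)
    (hout : ∀ z : ℂ, z₀ ≤ ‖z‖ → ¬ |z.arg| ≤ θ →
      ‖Complex.exp (-z) * F z * Complex.exp z‖ ≤
        β₂ * ‖z‖ ^ c * Real.exp (α * ‖z‖)) :
    ∃ C > (0 : ℝ), ∃ n₀ : ℕ, ∀ n ≥ n₀,
      ‖(a n : ℂ) - Complex.exp (-(n : ℂ)) * F n‖ ≤
        C * (n : ℝ) ^ (c - 1 / 2) * Real.log n := by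
  have hsin : 0 < Real.sin θ := Real.sin_pos_of_pos_of_lt_pi hθ₁ (by linarith [Real.pi_pos])
  obtain ⟨n₀, hn₀⟩ := eventually_atTop.mp <| (eventually_ge_atTop 3).and <|
    (tendsto_natCast_atTop_atTop.eventually_ge_atTop (2 * z₀)).and
      (eventually_sqrt_log_div_lt (κ := 2 / π ^ 2) (by positivity) (half_pos hsin))
  refine ⟨2 * Real.exp 1 * β₁ + β₂ / (1 - α) + 2 * π * Real.exp 1 * β₁ * 2 ^ c / Real.sin θ,
    add_pos_of_pos_of_nonneg (add_pos_of_pos_of_nonneg (by positivity)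
      (div_nonneg hβ₂.le (by linarith))) (by positivity), n₀, fun n hn => ?_⟩
  obtain ⟨hn₃, hnz₀, hδn⟩ := hn₀ n hn
  have hδ : 2 / π ^ 2 * n * √(Real.log n / (2 / π ^ 2 * n)) ^ 2 = Real.log n := by
    rw [Real.sq_sqrt (div_nonneg (Real.log_natCast_nonneg n) (by positivity))]
    field_simp
  exact (norm_coeff_sub_le (fun j => (a j : ℂ)) hF hFsum hθ₁.le hθ₂ hβ₁.le hβ₂.le hc.le hin hout
    (by omega) hnz₀ (Real.sqrt_nonneg _) hδn).trans
    (factorial_div_pow_mul_le_of_log_eq hn₃ hα₂ hβ₁.le hβ₂.le hsin hδ)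

/-- The depoissonization lemma of Jacquet and Szpankowski: if the Poisson transform
`P(z) = e^{−z} ∑_j a_j z^j / j!` of a real sequence extends to an entire function `F`
(so `P(z) = e^{−z} F(z)`) which is `O(|z|^c)` inside a cone `|arg z| ≤ θ` and such that
`P(z)e^z` is `O(|z|^c e^{α|z|})` outside the cone, then `a_n = P(n) + O(n^{c−1/2} ln n)`. -/
theorem depoissonization (a : ℕ → ℝ) (F : ℂ → ℂ)
    (hF : Differentiable ℂ F)
    (hFsum : ∀ z : ℂ, HasSum (fun j : ℕ => (a j : ℂ) * z ^ j / (j.factorial : ℂ)) (F z))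
    (θ : ℝ) (hθ₁ : 0 < θ) (hθ₂ : θ < Real.pi / 2)
    (α β₁ β₂ c z₀ : ℝ) (hα₁ : 0 < α) (hα₂ : α < 1)
    (hβ₁ : 0 < β₁) (hβ₂ : 0 < β₂) (hc : 0 < c) (hz₀ : 0 < z₀)
    (hin : ∀ z : ℂ, z₀ ≤ ‖z‖ → |z.arg| ≤ θ →
      ‖Complex.exp (-z) * F z‖ ≤ β₁ * ‖z‖ ^ c)
    (hout : ∀ z : ℂ, z₀ ≤ ‖z‖ → ¬ |z.arg| ≤ θ →
      ‖Complex.exp (-z) * F z * Complex.exp z‖ ≤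
        β₂ * ‖z‖ ^ c * Real.exp (α * ‖z‖)) :
    ∃ C > (0 : ℝ), ∃ n₀ : ℕ, ∀ n ≥ n₀,
      ‖(a n : ℂ) - Complex.exp (-(n : ℂ)) * F n‖ ≤
        C * (n : ℝ) ^ (c - 1 / 2) * Real.log n :=
  depoissonization_general a F hF hFsum θ hθ₁ hθ₂ α β₁ β₂ c z₀ hα₂ hβ₁ hβ₂ hc hin hout
end

section
/- In the unbiased Bernoulli trie model, let Ψ(t,z) = ∑_{j=1}^∞ j·E[e^{tδ_j}]·z^j/j!. Then for every real t with |t| < ln 2 and every real z, Ψ(t,z) = 2e^t·e^{z/2}·Ψ(t, z/2) + z(1 − e^t), all series being absolutely convergent. -/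
/-!
For `n ≥ 2` keys, the depth of a fixed key is at most `m` exactly when its first `m` bits
separate it from every other key (keys being almost surely distinct), so counting bit patterns
gives `P(δ_n ≤ m) = (1 - 2^{-m})^{n-1}`. Substituting `P(δ_n = m)` into `Ψ` and exchanging the sums
over `j` and `m` (absolutely convergent because `e^t < 2`) turns the sum over `j` into
exponential series:
`Ψ(t,z) = z + ∑_{m≥0} z e^{t(m+1)} (e^{(1-2^{-m-1})z} - e^{(1-2^{-m})z})`.
As `(1 - 2^{-m-1}) z = z/2 + (1 - 2^{-m}) z/2`, shifting `m` by one relates this series to the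
same series at `z/2`, which is the functional equation.
-/

open MeasureTheory ProbabilityTheory Filter
open scoped ENNReal NNReal Topology

noncomputable section

/-- The length of the longest common prefix of two infinite binary strings. -/
def lcp (x y : ℕ → Bool) : ℕ := sSup {m : ℕ | ∀ k < m, x k = y k}

/-- The depth of key `i` in the trie built on the keys `X 0, …, X (n-1)`. -/
def trieDepth (X : ℕ → ℕ → Bool) (n i : ℕ) : ℕ :=
  1 + ((Finset.range n).erase i).sup fun j => lcp (X i) (X j)

/-- The distance between the (distinct) keys `i` and `j` in the trie on `n` keys. -/
def trieDist (X : ℕ → ℕ → Bool) (n i j : ℕ) : ℕ :=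
  trieDepth X n i + trieDepth X n j - 2 * lcp (X i) (X j)

/-- The unbiased Bernoulli trie model: the keys `X 0, X 1, …` are i.i.d. random infinite
binary strings whose bits are i.i.d. uniform on `{0,1}`. -/
structure TrieModel {Ω : Type*} [MeasurableSpace Ω] (P : Measure Ω)
    (X : ℕ → Ω → ℕ → Bool) : Prop where
  prob : IsProbabilityMeasure P
  measBit : ∀ i k, Measurable fun ω => X i ω k
  indepBits : iIndepFun (β := fun _ : ℕ × ℕ => Bool)
      (fun p ω => X p.1 ω p.2) P
  fairBits : ∀ i k, P {ω | X i ω k = true} = 1 / 2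

/-- `δ n` is distributed as the depth `d_I(n)` of a uniformly random key `I` among the `n`
keys, chosen independently of the keys (with `δ 1 = 0` for a single key). -/
def IsTrieDepthRV {Ω : Type*} [MeasurableSpace Ω] (P : Measure Ω)
    (X : ℕ → Ω → ℕ → Bool) (δ : ℕ → Ω → ℕ) : Prop :=
  (∀ n, Measurable (δ n)) ∧
  P {ω | δ 1 ω = 0} = 1 ∧
  ∀ n, 2 ≤ n → ∀ m : ℕ,
    P {ω | δ n ω = m} =
      (n : ℝ≥0∞)⁻¹ *
        ∑ i ∈ Finset.range n, P {ω | trieDepth (fun k => X k ω) n i = m}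

lemma lcp_lt_iff_exists_ne {x y : ℕ → Bool} (hxy : x ≠ y) {m : ℕ} :
    lcp x y < m ↔ ∃ k < m, x k ≠ y k := by
  obtain ⟨K, hK⟩ := Function.ne_iff.1 hxy
  have hbdd : BddAbove {m : ℕ | ∀ k < m, x k = y k} :=
    ⟨K, fun s hs => not_lt.1 fun hKs => hK (hs K hKs)⟩
  constructor
  · intro hm
    by_contra! h
    exact hm.not_ge (le_csSup hbdd h)
  · rintro ⟨k, hkm, hk⟩
    refine lt_of_le_of_lt (csSup_le ⟨0, by simp⟩ fun s hs => ?_) hkm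
    exact not_lt.1 fun hks => hk (hs k hks)

lemma trieDepth_le_iff {x : ℕ → ℕ → Bool} {n i : ℕ}
    (hn : ((Finset.range n).erase i).Nonempty)
    (hx : ∀ j ∈ (Finset.range n).erase i, x i ≠ x j) (m : ℕ) :
    trieDepth x n i ≤ m ↔ ∀ j ∈ (Finset.range n).erase i, ∃ k < m, x i k ≠ x j k := by
  rcases Nat.eq_zero_or_pos m with rfl | hm
  · obtain ⟨j, hj⟩ := hn
    exact iff_of_false (by simp [trieDepth]) fun h => by simpa using h j hj
  · rw [trieDepth, add_comm, Nat.add_one_le_iff, Finset.sup_lt_iff hm]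
    exact forall₂_congr fun j hj => lcp_lt_iff_exists_ne (hx j hj)

theorem Nat.card_subtype_forall_ne_apply {α β : Type*} [Finite α] [Finite β] [DecidableEq α]
    (i : α) :
    Nat.card {v : α → β // ∀ j, j ≠ i → v j ≠ v i} =
      Nat.card β * (Nat.card β - 1) ^ (Nat.card α - 1) := by
  have := Fintype.ofFinite α
  have := Fintype.ofFinite β
  let e : {v : α → β // ∀ j, j ≠ i → v j ≠ v i} ≃
      Σ b : β, ({j // j ≠ i} → {c : β // c ≠ b}) :=
    ((Equiv.funSplitAt i β).subtypeEquiv fun v => by simp [Subtype.forall]).trans <|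
      (Equiv.subtypeProdEquivSigmaSubtype fun b (f : {j // j ≠ i} → β) => ∀ j, f j ≠ b).trans <|
        Equiv.sigmaCongrRight fun b => Equiv.subtypePiEquivPi (p := fun _ c => c ≠ b)
  classical
  rw [Nat.card_congr e]
  simp [Nat.card_eq_fintype_card, Fintype.card_sigma]

section FairBits

variable {Ω ι κ : Type*} [MeasurableSpace Ω] {P : Measure Ω} {Y : ι → Ω → Bool}
  [Fintype κ] {e : κ → ι}

theorem ProbabilityTheory.iIndepFun.measure_forall_eq_of_fair (hY : iIndepFun Y P)
    (hfair : ∀ i b, P {ω | Y i ω = b} = 2⁻¹) (he : e.Injective) (v : κ → Bool) :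
    P {ω | ∀ k, Y (e k) ω = v k} = 2⁻¹ ^ Fintype.card κ := by
  have h := (hY.precomp he).meas_iInter (s := fun k => {ω | Y (e k) ω = v k})
    fun k => ⟨{v k}, trivial, rfl⟩
  simpa [Set.ofPred_forall, hfair] using h

theorem ProbabilityTheory.iIndepFun.measure_mem_of_fair (hY : iIndepFun Y P)
    (hmeas : ∀ i, Measurable (Y i)) (hfair : ∀ i b, P {ω | Y i ω = b} = 2⁻¹)
    (he : e.Injective) (S : Finset (κ → Bool)) :
    P {ω | (fun k => Y (e k) ω) ∈ S} = S.card * 2⁻¹ ^ Fintype.card κ := by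
  have hblock : Measurable fun ω k => Y (e k) ω := measurable_pi_lambda _ fun k => hmeas (e k)
  change P ((fun ω k => Y (e k) ω) ⁻¹' S) = _
  rw [← sum_measure_preimage_singleton S
    fun v _ => hblock (measurableSet_singleton v)]
  simp [Set.preimage, funext_iff, hY.measure_forall_eq_of_fair hfair he]

end FairBits

theorem integral_comp_eq_tsum {Ω α : Type*} [MeasurableSpace Ω] {P : Measure Ω}
    [IsFiniteMeasure P] [MeasurableSpace α] [Countable α] [MeasurableSingletonClass α]
    {δ : Ω → α} (hδ : Measurable δ) {f : α → ℝ}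
    (hf : Summable fun a => P.real {ω | δ ω = a} * ‖f a‖) :
    ∫ ω, f (δ ω) ∂P = ∑' a, P.real {ω | δ ω = a} * f a := by
  have hmap (a : α) : P.map δ {a} = P {ω | δ ω = a} :=
    Measure.map_apply hδ (measurableSet_singleton a)
  rw [← integral_map hδ.aemeasurable (measurable_of_countable f).aestronglyMeasurable,
    ← Measure.sum_smul_dirac (P.map δ), integral_sum_dirac_eq_tsum (fun _ => measure_ne_top _ _)]
  · simp [hmap, measureReal_def]
  · simpa [hmap, measureReal_def] using hf

def depthCdf (n m : ℕ) : ℝ := (1 - 2⁻¹ ^ m) ^ (n - 1)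

lemma one_sub_inv_two_pow_nonneg (m : ℕ) : 0 ≤ 1 - (2⁻¹ : ℝ) ^ m :=
  sub_nonneg.2 (pow_le_one₀ (by norm_num) (by norm_num))

lemma depthCdf_nonneg (n m : ℕ) : 0 ≤ depthCdf n m :=
  pow_nonneg (one_sub_inv_two_pow_nonneg m) _

lemma depthCdf_le_one (n m : ℕ) : depthCdf n m ≤ 1 :=
  pow_le_one₀ (one_sub_inv_two_pow_nonneg m) (sub_le_self _ (by positivity))

lemma depthCdf_mono (n : ℕ) : Monotone (depthCdf n) := fun _ _ h =>
  pow_le_pow_left₀ (one_sub_inv_two_pow_nonneg _)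
    (sub_le_sub_left (pow_le_pow_of_le_one (by norm_num) (by norm_num) h) _) _

lemma two_pow_mul_sub_one_pow_mul_inv_two_pow (m N : ℕ) :
    ((2 ^ m * (2 ^ m - 1) ^ N : ℕ) : ℝ) * 2⁻¹ ^ ((N + 1) * m) = (1 - 2⁻¹ ^ m) ^ N := by
  have h2 : (2 : ℝ) ^ m * 2⁻¹ ^ m = 1 := by rw [← mul_pow]; norm_num
  push_cast [Nat.one_le_two_pow]
  rw [add_mul, one_mul, pow_add, mul_comm N m, pow_mul]
  calc _ = ((2 : ℝ) ^ m * 2⁻¹ ^ m) * (((2 : ℝ) ^ m - 1) ^ N * (2⁻¹ ^ m) ^ N) := by ring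
    _ = _ := by rw [h2, one_mul, ← mul_pow, sub_mul, h2, one_mul]

-- `m - 1` truncates, so `depthPmf n 0 = 0`.
def depthPmf (n m : ℕ) : ℝ := depthCdf n m - depthCdf n (m - 1)

lemma depthPmf_nonneg (n m : ℕ) : 0 ≤ depthPmf n m :=
  sub_nonneg.2 (depthCdf_mono n (Nat.sub_le m 1))

lemma depthPmf_succ_le (n m : ℕ) : depthPmf n (m + 1) ≤ (n - 1 : ℕ) * 2⁻¹ ^ m := by
  have hbernoulli : 1 - (n - 1 : ℕ) * (2⁻¹ : ℝ) ^ m ≤ depthCdf n m := by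
    have h := one_add_mul_le_pow (a := -(2⁻¹ : ℝ) ^ m)
      (by linarith [pow_le_one₀ (n := m) (by norm_num : (0 : ℝ) ≤ 2⁻¹) (by norm_num)]) (n - 1)
    simpa [depthCdf, sub_eq_add_neg] using h
  rw [depthPmf, Nat.add_sub_cancel]
  linarith [depthCdf_le_one n (m + 1)]

lemma depthPmf_succ_mul_exp_le (n m : ℕ) (t : ℝ) :
    depthPmf n (m + 1) * Real.exp (t * (m + 1)) ≤
      (n - 1 : ℕ) * Real.exp t * (Real.exp t * 2⁻¹) ^ m := by
  calc depthPmf n (m + 1) * Real.exp (t * (m + 1))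
      ≤ (n - 1 : ℕ) * 2⁻¹ ^ m * Real.exp (t * (m + 1)) :=
        mul_le_mul_of_nonneg_right (depthPmf_succ_le n m) (Real.exp_nonneg _)
    _ = (n - 1 : ℕ) * Real.exp t * (Real.exp t * 2⁻¹) ^ m := by
        rw [mul_add_one, Real.exp_add, mul_comm t, Real.exp_nat_mul]
        ring

lemma summable_depthPmf_mul_exp {t : ℝ} (ht : Real.exp t < 2) (n : ℕ) :
    Summable fun m : ℕ => depthPmf n m * Real.exp (t * m) := by
  have hratio : Real.exp t * 2⁻¹ < 1 := by linarith
  refine (summable_nat_add_iff 1).1 <| Summable.of_nonneg_of_le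
    (fun m => mul_nonneg (depthPmf_nonneg _ _) (Real.exp_nonneg _)) (fun m => ?_)
    ((summable_geometric_of_lt_one (by positivity) hratio).mul_left ((n - 1 : ℕ) * Real.exp t))
  simpa using depthPmf_succ_mul_exp_le n m t

def isolatedWithin {Ω : Type*} (X : ℕ → Ω → ℕ → Bool) (n i m : ℕ) : Set Ω :=
  {ω | ∀ j ∈ (Finset.range n).erase i, ∃ k < m, X i ω k ≠ X j ω k}

lemma isolatedWithin_mono {Ω : Type*} (X : ℕ → Ω → ℕ → Bool) (n i : ℕ) :
    Monotone (isolatedWithin X n i) :=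
  fun _ _ h _ hω j hj => (hω j hj).imp fun _ hk => ⟨hk.1.trans_le h, hk.2⟩

namespace TrieModel

variable {Ω : Type*} [MeasurableSpace Ω] {P : Measure Ω} {X : ℕ → Ω → ℕ → Bool}

lemma measure_bit_eq (hX : TrieModel P X) (i k : ℕ) (b : Bool) :
    P {ω | X i ω k = b} = 2⁻¹ := by
  have := hX.prob
  cases b
  · have hcompl : {ω | X i ω k = false} = {ω | X i ω k = true}ᶜ := by ext; simp
    have htrue : MeasurableSet {ω | X i ω k = true} := hX.measBit i k (measurableSet_singleton _)
    rw [hcompl, measure_compl htrue (measure_ne_top _ _),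
      hX.fairBits, measure_univ, one_div, ENNReal.one_sub_inv_two]
  · rw [hX.fairBits, one_div]

lemma measure_forall_bits_eq (hX : TrieModel P X) {κ : Type*} [Fintype κ] {e : κ → ℕ × ℕ}
    (he : e.Injective) (v : κ → Bool) :
    P {ω | ∀ p, X (e p).1 ω (e p).2 = v p} = 2⁻¹ ^ Fintype.card κ :=
  hX.indepBits.measure_forall_eq_of_fair (fun p => hX.measure_bit_eq p.1 p.2) he v

lemma measure_key_eq_key (hX : TrieModel P X) {i j : ℕ} (hij : i ≠ j) :
    P {ω | X i ω = X j ω} = 0 := by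
  have hbound (M : ℕ) : P {ω | X i ω = X j ω} ≤ 2⁻¹ ^ M := by
    let e : Bool × Fin M → ℕ × ℕ := fun p => (bif p.1 then i else j, p.2)
    have he : e.Injective := by
      rintro ⟨_ | _, k⟩ ⟨_ | _, k'⟩ h <;> simp_all [e, eq_comm, Fin.val_inj]
    calc P {ω | X i ω = X j ω}
        ≤ P (⋃ r : Fin M → Bool, {ω | ∀ p, X (e p).1 ω (e p).2 = r p.2}) :=
          measure_mono fun ω h => Set.mem_iUnion.2
            ⟨fun k => X i ω k, fun ⟨b, k⟩ => by cases b <;> simp [e, congrFun h k]⟩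
      _ ≤ ∑ r : Fin M → Bool, P {ω | ∀ p, X (e p).1 ω (e p).2 = r p.2} :=
          measure_iUnion_fintype_le _ _
      _ = 2 ^ M * (2⁻¹ ^ M * 2⁻¹ ^ M) := by
          simp only [hX.measure_forall_bits_eq he, Finset.sum_const, Finset.card_univ]
          simp [← pow_add, two_mul]
      _ = 2⁻¹ ^ M := by
          rw [← mul_assoc, ← mul_pow, ENNReal.mul_inv_cancel two_ne_zero ENNReal.ofNat_ne_top,
            one_pow, one_mul]
  exact le_antisymm (ge_of_tendsto' (ENNReal.tendsto_pow_atTop_nhds_zero_of_lt_one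
    (by norm_num)) hbound) zero_le

/-- Equal keys have `lcp = 0` (the `sSup` of `ℕ`), so this only holds almost surely. -/
lemma ae_trieDepth_le_iff (hX : TrieModel P X) {n i : ℕ} (hn : 2 ≤ n) (hi : i < n) :
    ∀ᵐ ω ∂P, ∀ m, trieDepth (fun k => X k ω) n i ≤ m ↔ ω ∈ isolatedWithin X n i m := by
  have hne : ((Finset.range n).erase i).Nonempty := by
    rw [← Finset.card_pos, Finset.card_erase_of_mem (Finset.mem_range.2 hi), Finset.card_range]
    omega
  have hdistinct : ∀ᵐ ω ∂P, ∀ j ∈ (Finset.range n).erase i, X i ω ≠ X j ω :=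
    (Finset.eventually_all _).2 fun j hj =>
      measure_eq_zero_iff_ae_notMem.1 (hX.measure_key_eq_key (Finset.ne_of_mem_erase hj).symm)
  filter_upwards [hdistinct] with ω hω m
  exact trieDepth_le_iff hne hω m

lemma measurableSet_isolatedWithin (hX : TrieModel P X) (n i m : ℕ) :
    MeasurableSet (isolatedWithin X n i m) := by
  have hinter : isolatedWithin X n i m =
      ⋂ j ∈ (Finset.range n).erase i, ⋃ k ∈ Set.Iio m, {ω | X i ω k = X j ω k}ᶜ := by
    ext; simp [isolatedWithin]
  rw [hinter]
  exact Finset.measurableSet_biInter _ fun j _ => MeasurableSet.biUnion (Set.to_countable _)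
    fun k _ => (measurableSet_eq_fun (hX.measBit i k) (hX.measBit j k)).compl

lemma measure_isolatedWithin (hX : TrieModel P X) {n i : ℕ} (hi : i < n) (m : ℕ) :
    P (isolatedWithin X n i m) = ENNReal.ofReal (depthCdf n m) := by
  let i' : Fin n := ⟨i, hi⟩
  let S : Finset (Fin n × Fin m → Bool) :=
    {v | ∀ j, j ≠ i' → Function.curry v j ≠ Function.curry v i'}
  have hset : isolatedWithin X n i m = {ω | (fun p : Fin n × Fin m => X p.1 ω p.2) ∈ S} := by
    ext ω
    simp only [isolatedWithin, S, i', Finset.mem_erase, ne_eq, ne_comm, Finset.mem_range,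
      and_imp, Set.mem_ofPred_eq, Fin.ext_iff, funext_iff, Function.curry_apply, Fin.forall_iff,
      not_forall, Finset.mem_filter, Finset.mem_univ, exists_prop, true_and]
    exact forall_congr' fun j => Imp.swap
  have hcard : S.card = 2 ^ m * (2 ^ m - 1) ^ (n - 1) := by
    have hcurry : Nat.card {v : Fin n × Fin m → Bool //
          ∀ j, j ≠ i' → Function.curry v j ≠ Function.curry v i'} =
        Nat.card {w : Fin n → Fin m → Bool // ∀ j, j ≠ i' → w j ≠ w i'} :=
      Nat.card_congr ((Equiv.curry _ _ _).subtypeEquiv fun _ => Iff.rfl)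
    rw [← Fintype.card_subtype, ← Nat.card_eq_fintype_card, hcurry,
      Nat.card_subtype_forall_ne_apply]
    simp
  have he : (fun p : Fin n × Fin m => ((p.1 : ℕ), (p.2 : ℕ))).Injective :=
    fun p q h => Prod.ext (Fin.ext (congrArg Prod.fst h)) (Fin.ext (congrArg Prod.snd h))
  rw [hset, hX.indepBits.measure_mem_of_fair (fun p => hX.measBit p.1 p.2)
    (fun p => hX.measure_bit_eq p.1 p.2) he S, hcard]
  obtain ⟨N, rfl⟩ : ∃ N, n = N + 1 := ⟨n - 1, by omega⟩
  rw [depthCdf, Nat.add_sub_cancel, ← two_pow_mul_sub_one_pow_mul_inv_two_pow,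
    ENNReal.ofReal_mul (Nat.cast_nonneg _), ENNReal.ofReal_natCast, ENNReal.ofReal_pow
      (by norm_num), ENNReal.ofReal_inv_of_pos (by norm_num)]
  simp [Fintype.card_prod]

lemma measure_trieDepth_eq (hX : TrieModel P X) {n i : ℕ} (hn : 2 ≤ n) (hi : i < n) (m : ℕ) :
    P {ω | trieDepth (fun k => X k ω) n i = m} = ENNReal.ofReal (depthPmf n m) := by
  have := hX.prob
  cases m with
  | zero => simp [trieDepth, depthPmf]
  | succ m =>
    have hae : {ω | trieDepth (fun k => X k ω) n i = m + 1} =ᵐ[P]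
        (isolatedWithin X n i (m + 1) \ isolatedWithin X n i m : Set Ω) := by
      refine Eventually.set_eq ?_
      filter_upwards [hX.ae_trieDepth_le_iff hn hi] with ω hω
      simp only [Set.mem_sdiff, ← hω]
      omega
    rw [measure_congr hae, measure_sdiff (isolatedWithin_mono X n i (by omega : m ≤ m + 1))
      (hX.measurableSet_isolatedWithin n i m).nullMeasurableSet (measure_ne_top _ _),
      hX.measure_isolatedWithin hi, hX.measure_isolatedWithin hi,
      ← ENNReal.ofReal_sub _ (depthCdf_nonneg n m)]
    rfl

end TrieModel

namespace IsTrieDepthRV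

variable {Ω : Type*} [MeasurableSpace Ω] {P : Measure Ω} {X : ℕ → Ω → ℕ → Bool}
  {δ : ℕ → Ω → ℕ}

lemma measure_eq (hX : TrieModel P X) (hδ : IsTrieDepthRV P X δ) {n : ℕ} (hn : 2 ≤ n)
    (m : ℕ) : P {ω | δ n ω = m} = ENNReal.ofReal (depthPmf n m) := by
  rw [hδ.2.2 n hn m, Finset.sum_congr rfl fun i hi =>
      hX.measure_trieDepth_eq hn (Finset.mem_range.1 hi) m,
    Finset.sum_const, Finset.card_range, nsmul_eq_mul, ← mul_assoc,
    ENNReal.inv_mul_cancel (by exact_mod_cast (by omega : n ≠ 0)) (ENNReal.natCast_ne_top n),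
    one_mul]

lemma integral_exp_one (hX : TrieModel P X) (hδ : IsTrieDepthRV P X δ) (t : ℝ) :
    ∫ ω, Real.exp (t * δ 1 ω) ∂P = 1 := by
  have := hX.prob
  have hzero : ∀ᵐ ω ∂P, δ 1 ω = 0 := by
    refine (ae_iff_measure_eq (p := fun ω => δ 1 ω = 0) ?_).2 (by rw [hδ.2.1, measure_univ])
    exact ((hδ.1 1) (measurableSet_singleton 0)).nullMeasurableSet
  rw [integral_congr_ae (hzero.mono fun ω h => by simp [h] : _ =ᵐ[P] fun _ => (1 : ℝ))]
  simp

lemma hasSum_integral_exp (hX : TrieModel P X) (hδ : IsTrieDepthRV P X δ)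
    {n : ℕ} (hn : 2 ≤ n) {t : ℝ} (ht : Real.exp t < 2) :
    HasSum (fun m : ℕ => depthPmf n (m + 1) * Real.exp (t * (m + 1)))
      (∫ ω, Real.exp (t * δ n ω) ∂P) := by
  have := hX.prob
  have hreal (m : ℕ) : P.real {ω | δ n ω = m} = depthPmf n m := by
    rw [measureReal_def, hδ.measure_eq hX hn, ENNReal.toReal_ofReal (depthPmf_nonneg n m)]
  have hsum := summable_depthPmf_mul_exp ht n
  rw [integral_comp_eq_tsum (hδ.1 n) (f := fun m : ℕ => Real.exp (t * m))
    (by simpa [hreal] using hsum)]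
  simpa [hreal, depthPmf] using (hasSum_nat_add_iff' 1).2 hsum.hasSum

end IsTrieDepthRV

lemma hasSum_pow_succ_div_factorial (x : ℝ) :
    HasSum (fun n : ℕ => x ^ (n + 1) / (n + 1).factorial) (Real.exp x - 1) := by
  have h := NormedSpace.expSeries_div_hasSum_exp x
  rw [← Real.exp_eq_exp_ℝ, ← hasSum_nat_add_iff' 1] at h
  simpa using h

section DepthSeries

variable {t : ℝ}

def depthExpTerm (t z : ℝ) (m : ℕ) : ℝ :=
  z * Real.exp (t * (m + 1)) *
    (Real.exp ((1 - 2⁻¹ ^ (m + 1)) * z) - Real.exp ((1 - 2⁻¹ ^ m) * z))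

/-- The `(n + 2)`-th term of `Ψ` is `∑_m depthDoubleTerm t z n m`: expand `E[e^{tδ_{n+2}}]` over
the values `m + 1` of `δ_{n+2}` and use `(n + 2) / (n + 2)! = 1 / (n + 1)!`. -/
def depthDoubleTerm (t z : ℝ) (n m : ℕ) : ℝ :=
  depthPmf (n + 2) (m + 1) * Real.exp (t * (m + 1)) * (z ^ (n + 2) / (n + 1).factorial)

lemma norm_depthDoubleTerm_le (t z : ℝ) (n m : ℕ) :
    ‖depthDoubleTerm t z n m‖ ≤
      (|z| ^ 2 * (|z| ^ n / n.factorial)) * (Real.exp t * (Real.exp t * 2⁻¹) ^ m) := by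
  have hfact : ((n + 1).factorial : ℝ) = (n + 1) * n.factorial := by
    push_cast [Nat.factorial_succ]; ring
  rw [depthDoubleTerm, norm_mul, norm_div, norm_pow, Real.norm_eq_abs, Real.norm_eq_abs,
    abs_of_nonneg (mul_nonneg (depthPmf_nonneg _ _) (Real.exp_nonneg _)), Real.norm_natCast, hfact]
  calc depthPmf (n + 2) (m + 1) * Real.exp (t * (m + 1)) * (|z| ^ (n + 2) / ((n + 1) * n.factorial))
      ≤ (n + 1 : ℕ) * Real.exp t * (Real.exp t * 2⁻¹) ^ m *
          (|z| ^ (n + 2) / ((n + 1) * n.factorial)) :=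
        mul_le_mul_of_nonneg_right (depthPmf_succ_mul_exp_le (n + 2) m t) (by positivity)
    _ = _ := by
        field_simp
        push_cast
        ring

lemma hasSum_depthDoubleTerm_left (t z : ℝ) (m : ℕ) :
    HasSum (fun n => depthDoubleTerm t z n m) (depthExpTerm t z m) := by
  have hsplit (n : ℕ) : depthDoubleTerm t z n m = z * Real.exp (t * (m + 1)) *
      (((1 - 2⁻¹ ^ (m + 1)) * z) ^ (n + 1) / (n + 1).factorial -
        ((1 - 2⁻¹ ^ m) * z) ^ (n + 1) / (n + 1).factorial) := by
    rw [depthDoubleTerm, depthPmf, depthCdf, depthCdf, Nat.add_sub_cancel,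
      show n + 2 - 1 = n + 1 by omega, mul_pow, mul_pow]
    ring
  have h := ((hasSum_pow_succ_div_factorial ((1 - 2⁻¹ ^ (m + 1)) * z)).sub
    (hasSum_pow_succ_div_factorial ((1 - 2⁻¹ ^ m) * z))).mul_left (z * Real.exp (t * (m + 1)))
  simpa only [depthExpTerm, ← hsplit, sub_sub_sub_cancel_right] using h

lemma summable_depthDoubleTerm (ht : Real.exp t < 2) (z : ℝ) :
    Summable (Function.uncurry (depthDoubleTerm t z)) := by
  have hratio : Real.exp t * 2⁻¹ < 1 := by linarith
  refine Summable.of_norm_bounded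
    (((Real.summable_pow_div_factorial |z|).mul_left (|z| ^ 2)).mul_of_nonneg
      ((summable_geometric_of_lt_one (by positivity) hratio).mul_left (Real.exp t))
      (fun n => by positivity) (fun m => by positivity))
    fun p => norm_depthDoubleTerm_le t z p.1 p.2

theorem hasSum_depth_egf (ht : Real.exp t < 2) (z : ℝ) {E : ℕ → ℝ} (hE1 : E 1 = 1)
    (hE : ∀ n, HasSum (fun m : ℕ => depthPmf (n + 2) (m + 1) * Real.exp (t * (m + 1)))
      (E (n + 2))) :
    HasSum (fun j : ℕ => j * E j * z ^ j / j.factorial) (z + ∑' m, depthExpTerm t z m) ∧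
      Summable (depthExpTerm t z) := by
  have htotal := (summable_depthDoubleTerm ht z).hasSum
  have hrows : HasSum (fun n : ℕ => E (n + 2) * (z ^ (n + 2) / (n + 1).factorial)) _ :=
    htotal.prod_fiberwise fun n => (hE n).mul_right _
  have hcols : HasSum (depthExpTerm t z) _ :=
    ((Equiv.prodComm ℕ ℕ).hasSum_iff.2 htotal).prod_fiberwise (hasSum_depthDoubleTerm_left t z)
  refine ⟨?_, hcols.summable⟩
  have hterm (n : ℕ) : ((n + 2 : ℕ) : ℝ) * E (n + 2) * z ^ (n + 2) / (n + 2).factorial =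
      E (n + 2) * (z ^ (n + 2) / (n + 1).factorial) := by
    push_cast [Nat.factorial_succ (n + 1)]
    field_simp
    ring
  have hhead : ∑ j ∈ Finset.range 2, (j : ℝ) * E j * z ^ j / j.factorial = z := by
    simp [Finset.sum_range_succ, hE1]
  rw [← hasSum_nat_add_iff' 2, hcols.tsum_eq, hhead, add_sub_cancel_left]
  simpa only [hterm] using hrows

lemma depthExpTerm_zero (t z : ℝ) :
    depthExpTerm t z 0 = z * Real.exp t * (Real.exp (z / 2) - 1) := by
  have hhalf : (1 - 2⁻¹ ^ (0 + 1) : ℝ) * z = z / 2 := by ring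
  rw [depthExpTerm, hhalf, pow_zero, sub_self, zero_mul, Real.exp_zero, Nat.cast_zero, zero_add,
    mul_one]

lemma depthExpTerm_succ (t z : ℝ) (m : ℕ) :
    depthExpTerm t z (m + 1) = 2 * Real.exp t * Real.exp (z / 2) * depthExpTerm t (z / 2) m := by
  have hsplit (k : ℕ) : Real.exp ((1 - 2⁻¹ ^ (k + 1)) * z) =
      Real.exp (z / 2) * Real.exp ((1 - 2⁻¹ ^ k) * (z / 2)) := by
    rw [← Real.exp_add]; congr 1; ring
  have hshift : Real.exp (t * ((m + 1 : ℕ) + 1)) = Real.exp t * Real.exp (t * (m + 1)) := by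
    rw [← Real.exp_add]; push_cast; ring_nf
  rw [depthExpTerm, depthExpTerm, hsplit, hsplit, hshift]
  ring

end DepthSeries

/-- The functional equation `Ψ(t,z) = 2 e^t e^{z/2} Ψ(t,z/2) + z(1 − e^t)` for
`Ψ(t,z) = ∑_{j≥1} j E[e^{tδ_j}] z^j / j!`, all series being absolutely convergent. -/
theorem trie_depth_mgf_functional_equation {Ω : Type*} [MeasurableSpace Ω] (P : Measure Ω)
    (X : ℕ → Ω → ℕ → Bool) (δ : ℕ → Ω → ℕ)
    (hX : TrieModel P X) (hδ : IsTrieDepthRV P X δ)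
    (t : ℝ) (ht : |t| < Real.log 2) (z : ℝ) :
    Summable (fun j : ℕ =>
      (j : ℝ) * (∫ ω, Real.exp (t * δ j ω) ∂P) * z ^ j / (j.factorial : ℝ)) ∧
    Summable (fun j : ℕ =>
      (j : ℝ) * (∫ ω, Real.exp (t * δ j ω) ∂P) * (z / 2) ^ j / (j.factorial : ℝ)) ∧
    (∑' j : ℕ, (j : ℝ) * (∫ ω, Real.exp (t * δ j ω) ∂P) * z ^ j / (j.factorial : ℝ)) =
      2 * Real.exp t * Real.exp (z / 2) *
          (∑' j : ℕ,
            (j : ℝ) * (∫ ω, Real.exp (t * δ j ω) ∂P) * (z / 2) ^ j /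
              (j.factorial : ℝ)) +
        z * (1 - Real.exp t) := by
  have ht2 : Real.exp t < 2 :=
    calc Real.exp t < Real.exp (Real.log 2) := Real.exp_lt_exp.2 ((le_abs_self t).trans_lt ht)
      _ = 2 := Real.exp_log two_pos
  set E : ℕ → ℝ := fun j => ∫ ω, Real.exp (t * δ j ω) ∂P
  have hE1 : E 1 = 1 := hδ.integral_exp_one hX t
  have hE (n : ℕ) := hδ.hasSum_integral_exp hX (n := n + 2) (by omega) ht2
  obtain ⟨hΨ, hW⟩ := hasSum_depth_egf ht2 z hE1 hE
  obtain ⟨hΨhalf, -⟩ := hasSum_depth_egf ht2 (z / 2) hE1 hE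
  refine ⟨hΨ.summable, hΨhalf.summable, ?_⟩
  rw [hΨ.tsum_eq, hΨhalf.tsum_eq, hW.tsum_eq_zero_add, depthExpTerm_zero]
  simp only [depthExpTerm_succ, tsum_mul_left]
  ring
end
end

section
/- For every complex s with −3 < Re s < −2, the integral ∫_0^∞ (1 − e^{−z})·z^{s+1} dz converges absolutely and equals −Γ(s+2). -/
/-!
Write `a = s + 2`, so `-1 < Re a < 0`, and integrate by parts against the antiderivative
`z ^ a / a` of `z ^ (a - 1)`. Since `0 ≤ 1 - e^{-z} ≤ min 1 z`, the boundary term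
`(1 - e^{-z}) z ^ a / a` is `O(z ^ (Re a + 1))` at `0` and `O(z ^ Re a)` at `∞`, so it vanishes at
both ends, and what remains is `-∫ e^{-z} z ^ a / a = -Γ(a + 1) / a = -Γ(a)`.
-/

open MeasureTheory Filter Topology Set

namespace Real

lemma one_sub_exp_neg_nonneg {x : ℝ} (hx : 0 ≤ x) : 0 ≤ 1 - exp (-x) := by
  linarith [exp_le_one_iff.mpr (neg_nonpos.mpr hx)]

lemma one_sub_exp_neg_le_one (x : ℝ) : 1 - exp (-x) ≤ 1 := by
  linarith [exp_pos (-x)]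

lemma one_sub_exp_neg_le_self (x : ℝ) : 1 - exp (-x) ≤ x := by
  linarith [one_sub_le_exp_neg x]

end Real

section

variable {x : ℝ} {a w : ℂ}

lemma norm_one_sub_exp_neg_mul_cpow (hx : 0 < x) (w : ℂ) :
    ‖((1 - Real.exp (-x) : ℝ) : ℂ) * (x : ℂ) ^ w‖ = (1 - Real.exp (-x)) * x ^ w.re := by
  rw [norm_mul, Complex.norm_real, Real.norm_of_nonneg (Real.one_sub_exp_neg_nonneg hx.le),
    Complex.norm_cpow_eq_rpow_re_of_pos hx]

lemma norm_one_sub_exp_neg_mul_cpow_le_rpow (hx : 0 < x) (w : ℂ) :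
    ‖((1 - Real.exp (-x) : ℝ) : ℂ) * (x : ℂ) ^ w‖ ≤ x ^ w.re := by
  rw [norm_one_sub_exp_neg_mul_cpow hx]
  exact mul_le_of_le_one_left (by positivity) (Real.one_sub_exp_neg_le_one x)

lemma norm_one_sub_exp_neg_mul_cpow_le_rpow_add_one (hx : 0 < x) (w : ℂ) :
    ‖((1 - Real.exp (-x) : ℝ) : ℂ) * (x : ℂ) ^ w‖ ≤ x ^ (w.re + 1) := by
  rw [norm_one_sub_exp_neg_mul_cpow hx, Real.rpow_add_one hx.ne', mul_comm]
  exact mul_le_mul_of_nonneg_left (Real.one_sub_exp_neg_le_self x) (by positivity)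

lemma continuousOn_one_sub_exp_neg_mul_cpow (w : ℂ) :
    ContinuousOn (fun x : ℝ => ((1 - Real.exp (-x) : ℝ) : ℂ) * (x : ℂ) ^ w) (Ioi 0) :=
  (by fun_prop : Continuous fun x : ℝ => ((1 - Real.exp (-x) : ℝ) : ℂ)).continuousOn.mul
    fun x hx => (Complex.continuousAt_ofReal_cpow_const x w (Or.inr hx.ne')).continuousWithinAt

lemma integrableOn_one_sub_exp_neg_mul_cpow (hw₁ : -2 < w.re) (hw₂ : w.re < -1) :
    IntegrableOn (fun x : ℝ => ((1 - Real.exp (-x) : ℝ) : ℂ) * (x : ℂ) ^ w) (Ioi 0) := by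
  have hmeas : AEStronglyMeasurable (fun x : ℝ => ((1 - Real.exp (-x) : ℝ) : ℂ) * (x : ℂ) ^ w)
      (volume.restrict (Ioi 0)) :=
    (continuousOn_one_sub_exp_neg_mul_cpow w).aestronglyMeasurable measurableSet_Ioi
  rw [← Ioc_union_Ioi_eq_Ioi zero_le_one, integrableOn_union]
  constructor
  · have hbound : IntegrableOn (fun x : ℝ => x ^ (w.re + 1)) (Ioc 0 1) := by
      rw [← intervalIntegrable_iff_integrableOn_Ioc_of_le zero_le_one]
      exact intervalIntegral.intervalIntegrable_rpow' (by linarith)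
    refine hbound.mono' (hmeas.mono_set Ioc_subset_Ioi_self) ?_
    filter_upwards [ae_restrict_mem measurableSet_Ioc] with x hx
    exact norm_one_sub_exp_neg_mul_cpow_le_rpow_add_one hx.1 w
  · refine (integrableOn_Ioi_rpow_of_lt hw₂ one_pos).mono'
      (hmeas.mono_set (Ioi_subset_Ioi zero_le_one)) ?_
    filter_upwards [ae_restrict_mem measurableSet_Ioi] with x hx
    exact norm_one_sub_exp_neg_mul_cpow_le_rpow (zero_lt_one.trans hx) w

lemma tendsto_one_sub_exp_neg_mul_cpow_nhdsGT_zero (hw : -1 < w.re) :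
    Tendsto (fun x : ℝ => ((1 - Real.exp (-x) : ℝ) : ℂ) * (x : ℂ) ^ w) (𝓝[>] 0) (𝓝 0) := by
  have hrpow : Tendsto (fun x : ℝ => x ^ (w.re + 1)) (𝓝[>] 0) (𝓝 0) := by
    simpa [Real.zero_rpow (by linarith : w.re + 1 ≠ 0)] using
      ((Real.continuousAt_rpow_const 0 (w.re + 1) (Or.inr (by linarith))).tendsto).mono_left
        nhdsWithin_le_nhds
  exact squeeze_zero_norm' (eventually_nhdsWithin_of_forall fun x hx =>
    norm_one_sub_exp_neg_mul_cpow_le_rpow_add_one hx w) hrpow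

lemma tendsto_one_sub_exp_neg_mul_cpow_atTop (hw : w.re < 0) :
    Tendsto (fun x : ℝ => ((1 - Real.exp (-x) : ℝ) : ℂ) * (x : ℂ) ^ w) atTop (𝓝 0) :=
  squeeze_zero_norm'
    ((eventually_gt_atTop 0).mono fun x hx => norm_one_sub_exp_neg_mul_cpow_le_rpow hx w)
    (by simpa using tendsto_rpow_neg_atTop (neg_pos.mpr hw))

lemma integrableOn_exp_neg_mul_cpow_div (ha : -1 < a.re) :
    IntegrableOn (fun x : ℝ => (Real.exp (-x) : ℂ) * ((x : ℂ) ^ a / a)) (Ioi 0) := by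
  have h := Complex.GammaIntegral_convergent (s := a + 1)
    (by rw [Complex.add_re, Complex.one_re]; linarith)
  simp only [add_sub_cancel_right] at h
  exact IntegrableOn.congr_fun (h.div_const a) (fun x _ => mul_div_assoc ..) measurableSet_Ioi

lemma integral_exp_neg_mul_cpow_div (ha : -1 < a.re) (ha₀ : a ≠ 0) :
    ∫ x in Ioi 0, (Real.exp (-x) : ℂ) * ((x : ℂ) ^ a / a) = Complex.Gamma a := by
  have h := Complex.Gamma_eq_integral (s := a + 1)
    (by rw [Complex.add_re, Complex.one_re]; linarith)
  rw [Complex.Gamma_add_one a ha₀, Complex.GammaIntegral, add_sub_cancel_right] at h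
  simp_rw [← mul_div_assoc]
  rw [integral_div, ← h]
  field_simp

theorem integral_one_sub_exp_neg_mul_cpow_sub_one (ha₁ : -1 < a.re) (ha₂ : a.re < 0) :
    ∫ x in Ioi 0, ((1 - Real.exp (-x) : ℝ) : ℂ) * (x : ℂ) ^ (a - 1) = -Complex.Gamma a := by
  have ha₀ : a ≠ 0 := by rintro rfl; simp at ha₂
  have hre : (a - 1).re = a.re - 1 := by rw [Complex.sub_re, Complex.one_re]
  have hu : ∀ x ∈ Ioi (0 : ℝ),
      HasDerivAt (fun y : ℝ => ((1 - Real.exp (-y) : ℝ) : ℂ)) (Real.exp (-x) : ℂ) x := fun x _ => by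
    simpa using (((Real.hasDerivAt_exp _).comp x (hasDerivAt_neg x)).const_sub 1).ofReal_comp
  have hv : ∀ x ∈ Ioi (0 : ℝ),
      HasDerivAt (fun y : ℝ => (y : ℂ) ^ a / a) ((x : ℂ) ^ (a - 1)) x := fun x hx => by
    simpa only [sub_add_cancel] using
      hasDerivAt_ofReal_cpow_const' (r := a - 1) (ne_of_gt hx) (by rwa [Ne, sub_eq_neg_self])
  have hboundary : ∀ l : Filter ℝ,
      Tendsto (fun x : ℝ => ((1 - Real.exp (-x) : ℝ) : ℂ) * (x : ℂ) ^ a) l (𝓝 0) →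
      Tendsto (fun x : ℝ => ((1 - Real.exp (-x) : ℝ) : ℂ) * ((x : ℂ) ^ a / a)) l (𝓝 0) :=
    fun l h => by simpa only [mul_div_assoc, zero_div] using h.div_const a
  rw [integral_Ioi_mul_deriv_eq_deriv_mul hu hv
      (integrableOn_one_sub_exp_neg_mul_cpow (by rw [hre]; linarith) (by rw [hre]; linarith))
      (integrableOn_exp_neg_mul_cpow_div ha₁)
      (hboundary _ (tendsto_one_sub_exp_neg_mul_cpow_nhdsGT_zero ha₁))
      (hboundary _ (tendsto_one_sub_exp_neg_mul_cpow_atTop ha₂)),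
    integral_exp_neg_mul_cpow_div ha₁ ha₀]
  ring

end

/-- For `−3 < Re s < −2`, the integral `∫_0^∞ (1 − e^{−z}) z^{s+1} dz` converges
absolutely and equals `−Γ(s+2)`. -/
theorem integral_one_sub_exp_neg (s : ℂ) (hs₁ : -3 < s.re) (hs₂ : s.re < -2) :
    IntegrableOn (fun z : ℝ => ((1 - Real.exp (-z) : ℝ) : ℂ) * (z : ℂ) ^ (s + 1))
      (Set.Ioi 0) ∧
    (∫ z : ℝ in Set.Ioi 0, ((1 - Real.exp (-z) : ℝ) : ℂ) * (z : ℂ) ^ (s + 1)) =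
      -Complex.Gamma (s + 2) := by
  have hre : (s + 2).re = s.re + 2 := by rw [Complex.add_re, Complex.re_ofNat]
  have hre' : (s + 1).re = s.re + 1 := by rw [Complex.add_re, Complex.one_re]
  refine ⟨integrableOn_one_sub_exp_neg_mul_cpow (by linarith) (by linarith), ?_⟩
  rw [show s + 1 = s + 2 - 1 by ring]
  exact integral_one_sub_exp_neg_mul_cpow_sub_one (by linarith) (by linarith)
end

section
/- For every integer k ≥ 0 and every complex s with −3 < Re s < −2, the integral ∫_0^∞ e^{−z/2}·(1 − e^{−z/2^{k+1}})·z^{s+1} dz converges absolutely and equals 2^{s+2}·Γ(s+2)·(1 − (1 + 1/2^k)^{−(s+2)}). -/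
/-!
With `b = 1/2` and `d = (1 + 2⁻ᵏ)/2` the integrand is `(e^{-bt} - e^{-dt}) t^w`, `w = s + 1`.
Since `e^{-bt} - e^{-dt} = O(t e^{-bt})`, integrating by parts against `t^{w+1}/(w+1)` has
vanishing boundary terms and leaves the Gamma integrals `∫ t^{w+1} e^{-rt} dt = r^{-(w+2)} Γ(w+2)`,
which converge because `Re w > -2`; then `Γ(w+2) = (w+1) Γ(w+1)`.
-/

open MeasureTheory Set Filter Topology

theorem Real.exp_neg_mul_sub_exp_neg_mul_le (b d t : ℝ) :
    Real.exp (-(b * t)) - Real.exp (-(d * t)) ≤ (d - b) * t * Real.exp (-(b * t)) := by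
  have hsplit : Real.exp (-(d * t)) = Real.exp (-(b * t)) * Real.exp (-((d - b) * t)) := by
    rw [← Real.exp_add]; ring_nf
  have := Real.add_one_le_exp (-((d - b) * t))
  nlinarith [Real.exp_pos (-(b * t))]

theorem Real.exp_neg_mul_sub_exp_neg_mul_nonneg {b d t : ℝ} (hbd : b ≤ d) (ht : 0 ≤ t) :
    0 ≤ Real.exp (-(b * t)) - Real.exp (-(d * t)) :=
  sub_nonneg.2 (Real.exp_le_exp.2 (by nlinarith))

theorem norm_exp_neg_mul_sub_exp_neg_mul_mul_cpow_le {b d t : ℝ} (hbd : b ≤ d) (ht : 0 < t)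
    (w : ℂ) :
    ‖((Real.exp (-(b * t)) - Real.exp (-(d * t)) : ℝ) : ℂ) * (t : ℂ) ^ w‖ ≤
      (d - b) * (t ^ (w.re + 1) * Real.exp (-b * t)) := by
  rw [norm_mul, Complex.norm_real, Real.norm_of_nonneg
    (Real.exp_neg_mul_sub_exp_neg_mul_nonneg hbd ht.le), Complex.norm_cpow_eq_rpow_re_of_pos ht,
    Real.rpow_add_one ht.ne']
  calc _ ≤ (d - b) * t * Real.exp (-(b * t)) * t ^ w.re := by
        gcongr; exact Real.exp_neg_mul_sub_exp_neg_mul_le b d t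
    _ = _ := by rw [neg_mul]; ring

theorem integrableOn_rpow_mul_exp_neg_mul_Ioi {s b : ℝ} (hs : -1 < s) (hb : 0 < b) :
    IntegrableOn (fun t : ℝ => t ^ s * Real.exp (-b * t)) (Ioi 0) := by
  simpa using integrableOn_rpow_mul_exp_neg_mul_rpow hs one_pos hb

theorem Complex.integrableOn_cpow_mul_exp_neg_mul_Ioi {a : ℂ} (ha : -1 < a.re) {r : ℝ}
    (hr : 0 < r) : IntegrableOn (fun t : ℝ => (t : ℂ) ^ a * Complex.exp (-(r * t))) (Ioi 0) := by
  refine (integrableOn_rpow_mul_exp_neg_mul_Ioi ha hr).mono' ?_ ?_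
  · refine ContinuousOn.aestronglyMeasurable (fun t ht => ?_) measurableSet_Ioi
    exact ((Complex.continuousAt_ofReal_cpow_const t a (Or.inr (ne_of_gt ht))).mul
      (by fun_prop)).continuousWithinAt
  · refine ae_restrict_of_forall_mem measurableSet_Ioi fun t ht => le_of_eq ?_
    rw [norm_mul, Complex.norm_cpow_eq_rpow_re_of_pos ht, Complex.norm_exp]
    simp

theorem integrableOn_exp_neg_mul_sub_exp_neg_mul_mul_cpow {w : ℂ} (hw : -2 < w.re) {b d : ℝ}
    (hb : 0 < b) (hbd : b ≤ d) :
    IntegrableOn (fun t : ℝ => ((Real.exp (-(b * t)) - Real.exp (-(d * t)) : ℝ) : ℂ) * (t : ℂ) ^ w)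
      (Ioi 0) := by
  refine (((integrableOn_rpow_mul_exp_neg_mul_Ioi (by linarith : -1 < w.re + 1) hb)).const_mul
    (d - b)).mono' ?_ ?_
  · refine ContinuousOn.aestronglyMeasurable (fun t ht => ?_) measurableSet_Ioi
    exact ((by fun_prop : Continuous fun t : ℝ =>
      ((Real.exp (-(b * t)) - Real.exp (-(d * t)) : ℝ) : ℂ)).continuousAt.mul
      (Complex.continuousAt_ofReal_cpow_const t w (Or.inr (ne_of_gt ht)))).continuousWithinAt
  · exact ae_restrict_of_forall_mem measurableSet_Ioi fun t ht =>
      norm_exp_neg_mul_sub_exp_neg_mul_mul_cpow_le hbd ht w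

theorem tendsto_exp_neg_mul_sub_exp_neg_mul_mul_cpow_nhdsGT_zero {w : ℂ} (hw : -1 < w.re)
    {b d : ℝ} (hbd : b ≤ d) :
    Tendsto (fun t : ℝ => ((Real.exp (-(b * t)) - Real.exp (-(d * t)) : ℝ) : ℂ) * (t : ℂ) ^ w)
      (𝓝[>] 0) (𝓝 0) := by
  refine squeeze_zero_norm' (eventually_nhdsWithin_of_forall fun t ht =>
    norm_exp_neg_mul_sub_exp_neg_mul_mul_cpow_le hbd ht w) ?_
  have hcont : ContinuousAt (fun t : ℝ => (d - b) * (t ^ (w.re + 1) * Real.exp (-b * t))) 0 :=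
    continuousAt_const.mul (((Real.continuousAt_rpow_const 0 _ (Or.inr (by linarith))).mul
      (by fun_prop)))
  simpa [Real.zero_rpow (by linarith : w.re + 1 ≠ 0)] using
    hcont.tendsto.mono_left nhdsWithin_le_nhds

theorem tendsto_exp_neg_mul_sub_exp_neg_mul_mul_cpow_atTop (w : ℂ) {b d : ℝ} (hb : 0 < b)
    (hbd : b ≤ d) :
    Tendsto (fun t : ℝ => ((Real.exp (-(b * t)) - Real.exp (-(d * t)) : ℝ) : ℂ) * (t : ℂ) ^ w)
      atTop (𝓝 0) := by
  refine squeeze_zero_norm' ((eventually_gt_atTop 0).mono fun t ht =>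
    norm_exp_neg_mul_sub_exp_neg_mul_mul_cpow_le hbd ht w) ?_
  simpa using (tendsto_rpow_mul_exp_neg_mul_atTop_nhds_zero (w.re + 1) b hb).const_mul (d - b)

theorem Complex.mul_integral_cpow_mul_exp_neg_mul_Ioi {a : ℂ} (ha : -1 < a.re) (ha₀ : a ≠ 0)
    {r : ℝ} (hr : 0 < r) :
    r * ∫ t : ℝ in Ioi 0, (t : ℂ) ^ a * Complex.exp (-(r * t)) =
      a * ((1 / r) ^ a * Complex.Gamma a) := by
  have hr₀ : (r : ℂ) ≠ 0 := Complex.ofReal_ne_zero.2 hr.ne'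
  have h := Complex.integral_cpow_mul_exp_neg_mul_Ioi (a := a + 1) (by simp; linarith) hr
  rw [add_sub_cancel_right, Complex.Gamma_add_one a ha₀,
    Complex.cpow_add _ _ (one_div_ne_zero hr₀), Complex.cpow_one] at h
  rw [h]
  field_simp

theorem hasDerivAt_ofReal_exp_neg_mul_sub_exp_neg_mul (b d t : ℝ) :
    HasDerivAt (fun x : ℝ => ((Real.exp (-(b * x)) - Real.exp (-(d * x)) : ℝ) : ℂ))
      (d * Complex.exp (-(d * t)) - b * Complex.exp (-(b * t))) t := by
  have hb := (((hasDerivAt_id' t).const_mul b).neg).exp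
  have hd := (((hasDerivAt_id' t).const_mul d).neg).exp
  refine ((hb.sub hd).ofReal_comp).congr_deriv ?_
  simp only [Pi.neg_apply]
  push_cast
  ring

theorem integral_exp_neg_mul_sub_exp_neg_mul_mul_cpow {w : ℂ} (hw : -2 < w.re) (hw₁ : w ≠ -1)
    {b d : ℝ} (hb : 0 < b) (hbd : b ≤ d) :
    ∫ t : ℝ in Ioi 0, ((Real.exp (-(b * t)) - Real.exp (-(d * t)) : ℝ) : ℂ) * (t : ℂ) ^ w =
      Complex.Gamma (w + 1) * ((1 / b) ^ (w + 1) - (1 / d) ^ (w + 1)) := by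
  have hw' : -1 < (w + 1).re := by simp; linarith
  have hw₀ : w + 1 ≠ 0 := fun h => hw₁ (eq_neg_of_add_eq_zero_left h)
  set u : ℝ → ℂ := fun t => ((Real.exp (-(b * t)) - Real.exp (-(d * t)) : ℝ) : ℂ)
  set u' : ℝ → ℂ := fun t => d * Complex.exp (-(d * t)) - b * Complex.exp (-(b * t))
  set v : ℝ → ℂ := fun t => (t : ℂ) ^ (w + 1) / (w + 1)
  have hv (t : ℝ) (ht : t ∈ Ioi 0) : HasDerivAt v ((t : ℂ) ^ w) t :=
    hasDerivAt_ofReal_cpow_const' (ne_of_gt ht) hw₁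
  have hu'v : u' * v = fun t : ℝ => (w + 1)⁻¹ *
      (d * ((t : ℂ) ^ (w + 1) * Complex.exp (-(d * t))) -
        b * ((t : ℂ) ^ (w + 1) * Complex.exp (-(b * t)))) := by
    funext t; simp only [Pi.mul_apply, u', v]; ring
  have huv : u * v = fun t => u t * (t : ℂ) ^ (w + 1) / (w + 1) := by
    funext t; simp only [Pi.mul_apply, v]; ring
  have hId := Complex.integrableOn_cpow_mul_exp_neg_mul_Ioi hw' (lt_of_lt_of_le hb hbd)
  have hIb := Complex.integrableOn_cpow_mul_exp_neg_mul_Ioi hw' hb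
  have hparts := integral_Ioi_mul_deriv_eq_deriv_mul (a' := 0) (b' := 0)
    (fun t _ => hasDerivAt_ofReal_exp_neg_mul_sub_exp_neg_mul b d t) hv
    (integrableOn_exp_neg_mul_sub_exp_neg_mul_mul_cpow hw hb hbd)
    (by rw [hu'v]; exact ((hId.const_mul _).sub (hIb.const_mul _)).const_mul _)
    (by rw [huv, ← zero_div (w + 1)]
        exact (tendsto_exp_neg_mul_sub_exp_neg_mul_mul_cpow_nhdsGT_zero hw' hbd).div_const _)
    (by rw [huv, ← zero_div (w + 1)]
        exact (tendsto_exp_neg_mul_sub_exp_neg_mul_mul_cpow_atTop (w + 1) hb hbd).div_const _)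
  have hu'v_int : ∫ t in Ioi 0, u' t * v t = (w + 1)⁻¹ *
      (d * (∫ t : ℝ in Ioi 0, (t : ℂ) ^ (w + 1) * Complex.exp (-(d * t))) -
        b * ∫ t : ℝ in Ioi 0, (t : ℂ) ^ (w + 1) * Complex.exp (-(b * t))) := by
    rw [← integral_const_mul, ← integral_const_mul,
      ← integral_sub (hId.const_mul _) (hIb.const_mul _), ← integral_const_mul]
    exact congrArg (fun f => ∫ t in Ioi 0, f t) hu'v
  rw [hparts, hu'v_int,
    Complex.mul_integral_cpow_mul_exp_neg_mul_Ioi hw' hw₀ (lt_of_lt_of_le hb hbd),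
    Complex.mul_integral_cpow_mul_exp_neg_mul_Ioi hw' hw₀ hb]
  field_simp
  ring

/-- For every `k ≥ 0` and `−3 < Re s < −2`, the integral
`∫_0^∞ e^{−z/2} (1 − e^{−z/2^{k+1}}) z^{s+1} dz` converges absolutely and equals
`2^{s+2} Γ(s+2) (1 − (1 + 1/2^k)^{−(s+2)})`. -/
theorem integral_exp_half_one_sub_exp (k : ℕ) (s : ℂ) (hs₁ : -3 < s.re)
    (hs₂ : s.re < -2) :
    IntegrableOn
      (fun z : ℝ =>
        ((Real.exp (-z / 2) * (1 - Real.exp (-z / 2 ^ (k + 1))) : ℝ) : ℂ) *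
          (z : ℂ) ^ (s + 1))
      (Set.Ioi 0) ∧
    (∫ z : ℝ in Set.Ioi 0,
        ((Real.exp (-z / 2) * (1 - Real.exp (-z / 2 ^ (k + 1))) : ℝ) : ℂ) *
          (z : ℂ) ^ (s + 1)) =
      (2 : ℂ) ^ (s + 2) * Complex.Gamma (s + 2) *
        (1 - ((1 + 1 / 2 ^ k : ℂ)) ^ (-(s + 2))) := by
  set c : ℝ := 1 + 1 / 2 ^ k with hc
  have hbd : (2⁻¹ : ℝ) ≤ c / 2 := by
    have : (0 : ℝ) < 1 / 2 ^ k := by positivity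
    linarith
  have hw : -2 < (s + 1).re := by simp; linarith
  have hw₁ : s + 1 ≠ -1 := fun h => by
    have := congrArg Complex.re h
    simp at this
    linarith
  have hintegrand (z : ℝ) : Real.exp (-z / 2) * (1 - Real.exp (-z / 2 ^ (k + 1))) =
      Real.exp (-(2⁻¹ * z)) - Real.exp (-(c / 2 * z)) := by
    rw [mul_sub, mul_one, ← Real.exp_add, hc]
    congr 2 <;> ring
  simp_rw [hintegrand]
  refine ⟨integrableOn_exp_neg_mul_sub_exp_neg_mul_mul_cpow hw (by norm_num) hbd, ?_⟩
  rw [integral_exp_neg_mul_sub_exp_neg_mul_mul_cpow hw hw₁ (by norm_num) hbd,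
    show s + 1 + 1 = s + 2 by ring]
  have hb : (1 / ((2⁻¹ : ℝ) : ℂ)) ^ (s + 2) = 2 ^ (s + 2) := by norm_num
  have hd : (1 / ((c / 2 : ℝ) : ℂ)) ^ (s + 2) =
      2 ^ (s + 2) * (1 + 1 / 2 ^ k : ℂ) ^ (-(s + 2)) := by
    rw [show 1 / ((c / 2 : ℝ) : ℂ) = ((2 : ℝ) : ℂ) / (c : ℂ) by push_cast; field_simp,
      Complex.div_cpow_ofReal_nonneg zero_le_two (by positivity), div_eq_mul_inv,
      ← Complex.cpow_neg, hc]
    push_cast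
    rfl
  rw [hb, hd]
  ring
end

section
/- For every complex s with −3 < Re s < −2, the integral ∫_0^∞ z^{s+1}·(1 − e^{−z})² dz converges absolutely and equals (1 − 2^{s+3})·Γ(s+2)/2^{s+2}. -/
/-!
Integrate by parts against `t ^ (s + 2) / (s + 2)`: since `(1 - e^{-t})²` is `O(t²)` at `0` and
bounded at `∞`, the boundary terms vanish for `-4 < Re s < -2`, and the derivative
`2 (e^{-t} - e^{-2t})` turns the integral into a difference of two Gamma integrals at `s + 3`,
which converge once `Re s > -3`.
-/

open MeasureTheory Set Filter Complex
open scoped Topology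

section

variable {t : ℝ}

lemma one_sub_exp_neg_nonneg (ht : 0 ≤ t) : 0 ≤ 1 - Real.exp (-t) := by
  have := Real.exp_le_one_iff.mpr (neg_nonpos.mpr ht)
  linarith

lemma one_sub_exp_neg_sq_le_one (ht : 0 ≤ t) : (1 - Real.exp (-t)) ^ 2 ≤ 1 := by
  have := Real.exp_le_one_iff.mpr (neg_nonpos.mpr ht)
  nlinarith [Real.exp_pos (-t)]

lemma one_sub_exp_neg_sq_le_sq (ht : 0 ≤ t) : (1 - Real.exp (-t)) ^ 2 ≤ t ^ 2 := by
  have := Real.one_sub_le_exp_neg t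
  exact pow_le_pow_left₀ (one_sub_exp_neg_nonneg ht) (by linarith) 2

lemma norm_cpow_mul_one_sub_exp_neg_sq (b : ℂ) (ht : 0 < t) :
    ‖(t : ℂ) ^ b * ((1 - Real.exp (-t) : ℝ) : ℂ) ^ 2‖ = t ^ b.re * (1 - Real.exp (-t)) ^ 2 := by
  rw [norm_mul, norm_pow, norm_cpow_eq_rpow_re_of_pos ht, norm_real, Real.norm_eq_abs,
    abs_of_nonneg (one_sub_exp_neg_nonneg ht.le)]

lemma norm_cpow_mul_one_sub_exp_neg_sq_le (b : ℂ) (ht : 0 < t) :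
    ‖(t : ℂ) ^ b * ((1 - Real.exp (-t) : ℝ) : ℂ) ^ 2‖ ≤ t ^ b.re := by
  rw [norm_cpow_mul_one_sub_exp_neg_sq b ht]
  exact mul_le_of_le_one_right (by positivity) (one_sub_exp_neg_sq_le_one ht.le)

lemma norm_cpow_mul_one_sub_exp_neg_sq_le_rpow_add_two (b : ℂ) (ht : 0 < t) :
    ‖(t : ℂ) ^ b * ((1 - Real.exp (-t) : ℝ) : ℂ) ^ 2‖ ≤ t ^ (b.re + 2) := by
  rw [norm_cpow_mul_one_sub_exp_neg_sq b ht, Real.rpow_add ht, Real.rpow_two]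
  exact mul_le_mul_of_nonneg_left (one_sub_exp_neg_sq_le_sq ht.le) (by positivity)

end

section

variable {b : ℂ}

lemma integrableOn_cpow_mul_one_sub_exp_neg_sq (hb₁ : -3 < b.re) (hb₂ : b.re < -1) :
    IntegrableOn (fun t : ℝ => (t : ℂ) ^ b * ((1 - Real.exp (-t) : ℝ) : ℂ) ^ 2) (Ioi 0) := by
  have hmeas : AEStronglyMeasurable (fun t : ℝ => (t : ℂ) ^ b * ((1 - Real.exp (-t) : ℝ) : ℂ) ^ 2)
      (volume.restrict (Ioi 0)) := by
    refine ContinuousOn.aestronglyMeasurable (fun t (ht : 0 < t) => ?_) measurableSet_Ioi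
    exact ((continuousAt_ofReal_cpow_const _ _ (Or.inr ht.ne')).mul
      (by fun_prop)).continuousWithinAt
  rw [← Ioc_union_Ioi_eq_Ioi zero_le_one]
  refine IntegrableOn.union ?_ ?_
  · have : IntegrableOn (fun t : ℝ => t ^ (b.re + 2)) (Ioc 0 1) :=
      (intervalIntegrable_iff_integrableOn_Ioc_of_le zero_le_one).mp
        (intervalIntegral.intervalIntegrable_rpow' (by linarith))
    refine this.mono' (hmeas.mono_set Ioc_subset_Ioi_self) ?_
    filter_upwards [ae_restrict_mem measurableSet_Ioc] with t ht
    exact norm_cpow_mul_one_sub_exp_neg_sq_le_rpow_add_two b ht.1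
  · refine (integrableOn_Ioi_rpow_of_lt hb₂ one_pos).mono'
      (hmeas.mono_set (Ioi_subset_Ioi zero_le_one)) ?_
    filter_upwards [ae_restrict_mem measurableSet_Ioi] with t (ht : 1 < t)
    exact norm_cpow_mul_one_sub_exp_neg_sq_le b (one_pos.trans ht)

lemma tendsto_cpow_mul_one_sub_exp_neg_sq_nhdsGT_zero (hb : -2 < b.re) :
    Tendsto (fun t : ℝ => (t : ℂ) ^ b * ((1 - Real.exp (-t) : ℝ) : ℂ) ^ 2) (𝓝[>] 0) (𝓝 0) := by
  have hpow : Tendsto (fun t : ℝ => t ^ (b.re + 2)) (𝓝[>] 0) (𝓝 0) := by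
    simpa [Real.zero_rpow (by linarith : b.re + 2 ≠ 0)] using
      (Real.continuousAt_rpow_const 0 _ (Or.inr (by linarith : (0:ℝ) ≤ b.re + 2))).tendsto.mono_left
        nhdsWithin_le_nhds
  refine squeeze_zero_norm' ?_ hpow
  filter_upwards [self_mem_nhdsWithin] with t (ht : 0 < t)
  exact norm_cpow_mul_one_sub_exp_neg_sq_le_rpow_add_two b ht

lemma tendsto_cpow_mul_one_sub_exp_neg_sq_atTop (hb : b.re < 0) :
    Tendsto (fun t : ℝ => (t : ℂ) ^ b * ((1 - Real.exp (-t) : ℝ) : ℂ) ^ 2) atTop (𝓝 0) := by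
  refine squeeze_zero_norm' ?_ (by simpa using tendsto_rpow_neg_atTop (neg_pos.mpr hb))
  filter_upwards [eventually_gt_atTop 0] with t ht
  exact norm_cpow_mul_one_sub_exp_neg_sq_le b ht

end

lemma hasDerivAt_one_sub_exp_neg_sq (x : ℝ) :
    HasDerivAt (fun t : ℝ => ((1 - Real.exp (-t) : ℝ) : ℂ) ^ 2)
      (2 * (exp (-x) - exp (-(2 * x)))) x := by
  refine ((((Real.hasDerivAt_exp (-x)).comp x (hasDerivAt_neg x)).const_sub 1).ofReal_comp.pow
    2).congr_deriv ?_
  simp only [Function.comp_apply]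
  push_cast
  rw [show -(2 * (x : ℂ)) = -x + -x by ring, Complex.exp_add]
  ring

section

variable {a : ℂ}

lemma integrableOn_cpow_mul_exp_neg_mul {r : ℝ} (ha : 0 < a.re) (hr : 0 < r) :
    IntegrableOn (fun t : ℝ => (t : ℂ) ^ (a - 1) * exp (-(r * t))) (Ioi 0) := by
  have h := GammaIntegral_convergent ha
  rw [← mul_zero r, ← integrableOn_Ioi_comp_mul_left_iff _ _ hr] at h
  refine IntegrableOn.congr_fun (h.const_mul ((r : ℂ) ^ (a - 1))⁻¹) (fun t (ht : 0 < t) => ?_)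
    measurableSet_Ioi
  have hr' : (r : ℂ) ^ (a - 1) ≠ 0 := cpow_ne_zero_iff.mpr (Or.inl (ofReal_ne_zero.mpr hr.ne'))
  rw [ofReal_mul, mul_cpow_ofReal_nonneg hr.le ht.le, ofReal_exp, ofReal_neg, ofReal_mul]
  field_simp

lemma integral_cpow_mul_exp_neg_sub_exp_neg_two_mul (ha : 0 < a.re) :
    ∫ t : ℝ in Ioi 0, (t : ℂ) ^ (a - 1) * (exp (-t) - exp (-(2 * t))) =
      (1 - (2 ^ a)⁻¹) * Gamma a := by
  have h₁ := integral_cpow_mul_exp_neg_mul_Ioi ha one_pos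
  have h₂ := integral_cpow_mul_exp_neg_mul_Ioi ha two_pos
  have i₁ := integrableOn_cpow_mul_exp_neg_mul ha one_pos
  have i₂ := integrableOn_cpow_mul_exp_neg_mul ha two_pos
  push_cast at h₁ h₂ i₁ i₂
  simp only [one_mul, div_one, one_cpow] at h₁ i₁
  simp_rw [mul_sub]
  rw [integral_sub i₁ i₂, h₁, h₂, one_div, inv_cpow _ _ (by simp [Real.pi_ne_zero.symm])]
  ring

lemma integrableOn_cpow_mul_exp_neg_sub_exp_neg_two_mul (ha : 0 < a.re) :
    IntegrableOn (fun t : ℝ => (t : ℂ) ^ (a - 1) * (exp (-t) - exp (-(2 * t)))) (Ioi 0) := by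
  have i₁ := integrableOn_cpow_mul_exp_neg_mul ha one_pos
  have i₂ := integrableOn_cpow_mul_exp_neg_mul ha two_pos
  push_cast at i₁ i₂
  simp only [one_mul] at i₁
  simp_rw [mul_sub]
  exact i₁.sub i₂

lemma integral_cpow_mul_one_sub_exp_neg_sq (ha₁ : -1 < a.re) (ha₂ : a.re < 0) :
    ∫ t : ℝ in Ioi 0, (t : ℂ) ^ (a - 1) * ((1 - Real.exp (-t) : ℝ) : ℂ) ^ 2 =
      (1 - 2 ^ (a + 1)) * Gamma a / 2 ^ a := by
  have ha : a ≠ 0 := fun h => by simp [h] at ha₂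
  have hv : ∀ x ∈ Ioi (0 : ℝ), HasDerivAt (fun t : ℝ => (t : ℂ) ^ a / a) ((x : ℂ) ^ (a - 1)) x :=
    fun x hx => by
      simpa using hasDerivAt_ofReal_cpow_const' (ne_of_gt hx) (r := a - 1) (by simpa using ha)
  have hu'v : IntegrableOn (fun t : ℝ => 2 * (exp (-t) - exp (-(2 * t))) * ((t : ℂ) ^ a / a))
      (Ioi 0) := by
    refine IntegrableOn.congr_fun ((integrableOn_cpow_mul_exp_neg_sub_exp_neg_two_mul
      (a := a + 1) (by simp; linarith)).const_mul (2 / a)) (fun t _ => ?_) measurableSet_Ioi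
    simp only [add_sub_cancel_right]
    ring
  have huv' : IntegrableOn (fun t : ℝ => ((1 - Real.exp (-t) : ℝ) : ℂ) ^ 2 * (t : ℂ) ^ (a - 1))
      (Ioi 0) := by
    simpa only [mul_comm] using
      integrableOn_cpow_mul_one_sub_exp_neg_sq (b := a - 1) (by simp; linarith) (by simp; linarith)
  have hlim : ∀ l : Filter ℝ,
      Tendsto (fun t : ℝ => (t : ℂ) ^ a * ((1 - Real.exp (-t) : ℝ) : ℂ) ^ 2) l (𝓝 0) →
      Tendsto (fun t : ℝ => ((1 - Real.exp (-t) : ℝ) : ℂ) ^ 2 * ((t : ℂ) ^ a / a)) l (𝓝 0) :=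
    fun l h => by simpa only [zero_div] using (h.div_const a).congr fun t => by ring
  have hibp := integral_Ioi_mul_deriv_eq_deriv_mul (fun x _ => hasDerivAt_one_sub_exp_neg_sq x) hv
    huv' hu'v (hlim _ (tendsto_cpow_mul_one_sub_exp_neg_sq_nhdsGT_zero (by linarith)))
    (hlim _ (tendsto_cpow_mul_one_sub_exp_neg_sq_atTop ha₂))
  have hval : ∫ t : ℝ in Ioi 0, 2 * (exp (-t) - exp (-(2 * t))) * ((t : ℂ) ^ a / a) =
      2 / a * ((1 - (2 ^ (a + 1))⁻¹) * Gamma (a + 1)) := by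
    rw [← integral_cpow_mul_exp_neg_sub_exp_neg_two_mul (by simp; linarith),
      ← integral_const_mul]
    refine setIntegral_congr_fun measurableSet_Ioi fun t _ => ?_
    simp only [add_sub_cancel_right]
    ring
  have h2a : (2 : ℂ) ^ (a + 1) = 2 * 2 ^ a := by
    rw [cpow_add _ _ two_ne_zero, cpow_one, mul_comm]
  have h2a' : (2 : ℂ) ^ a ≠ 0 := by simp
  simp_rw [mul_comm (((1 - Real.exp (-_) : ℝ) : ℂ) ^ 2)] at hibp
  rw [hibp, hval, Gamma_add_one a ha, h2a]
  field_simp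
  ring

end

/-- For `−3 < Re s < −2`, the integral `∫_0^∞ z^{s+1} (1 − e^{−z})² dz` converges
absolutely and equals `(1 − 2^{s+3}) Γ(s+2) / 2^{s+2}`. -/
theorem integral_one_sub_exp_sq (s : ℂ) (hs₁ : -3 < s.re) (hs₂ : s.re < -2) :
    IntegrableOn (fun z : ℝ => (z : ℂ) ^ (s + 1) * ((1 - Real.exp (-z) : ℝ) : ℂ) ^ 2)
      (Set.Ioi 0) ∧
    (∫ z : ℝ in Set.Ioi 0, (z : ℂ) ^ (s + 1) * ((1 - Real.exp (-z) : ℝ) : ℂ) ^ 2) =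
      (1 - (2 : ℂ) ^ (s + 3)) * Complex.Gamma (s + 2) / (2 : ℂ) ^ (s + 2) := by
  refine ⟨integrableOn_cpow_mul_one_sub_exp_neg_sq (by simp; linarith) (by simp; linarith), ?_⟩
  have h := integral_cpow_mul_one_sub_exp_neg_sq (a := s + 2) (by simp; linarith)
    (by simp; linarith)
  rwa [show s + 2 - 1 = s + 1 by ring, show s + 2 + 1 = s + 3 by ring] at h
end
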